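/- arXiv:2510.08259 — 11 statements merged into one kernel-verified Lean document; each statement's English description precedes it below -/
import Mathlib

section
/- Let x : ℝ → ℝ^n be a curve, V1, V2 : ℝ^n → ℝ, N1, N2 : ℝ^n → ℝ nonnegative functions, and h : ℝ → ℝ nonnegative with h(0) = 0. Suppose there is a constant L > 0 with h(r) ≤ L·r for all r ≥ 0, and suppose that for every t ≥ 0 the maps t ↦ V1(x(t)) and t ↦ V2(x(t)) are differentiable with derivatives satisfying (d/dt)V1(x(t)) ≤ -N1(x(t)) and (d/dt)V2(x(t)) ≤ -N2(x(t)) + h(N1(x(t))). Then for every δ with 0 < δ < 1/L, setting W := V1 + δ·V2 and γ := min(1 - δ·L, δ), one has γ > 0 and, for all t ≥ 0, the map t ↦ W(x(t)) is differentiable with (d/dt)W(x(t)) ≤ -γ·(N1(x(t)) + N2(x(t))). -/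
/-!
Along the trajectory, the cross term `δ * h (N1 (x t)) ≤ δ * L * N1 (x t)` in the derivative of
`δ * V2 (x t)` is absorbed by the dissipation `-N1 (x t)` of `V1` as soon as `δ * L < 1`,
leaving `-(1 - δ * L) * N1 (x t) - δ * N2 (x t)`.
-/

open Filter MeasureTheory

lemma min_mul_add_le_mul_add_mul {c d a b : ℝ} (ha : 0 ≤ a) (hb : 0 ≤ b) :
    min c d * (a + b) ≤ c * a + d * b :=
  calc min c d * (a + b) = min c d * a + min c d * b := mul_add _ _ _
    _ ≤ c * a + d * b := add_le_add (mul_le_mul_of_nonneg_right (min_le_left _ _) ha)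
        (mul_le_mul_of_nonneg_right (min_le_right _ _) hb)

lemma add_mul_le_of_le_neg_of_le_neg_add {v₁ v₂ n₁ n₂ g L δ : ℝ} (hδ : 0 ≤ δ)
    (h₁ : v₁ ≤ -n₁) (h₂ : v₂ ≤ -n₂ + g) (hg : g ≤ L * n₁) :
    v₁ + δ * v₂ ≤ -((1 - δ * L) * n₁ + δ * n₂) := by
  have := mul_le_mul_of_nonneg_left (h₂.trans (add_le_add_right hg _)) hδ
  linarith

theorem stmt_0_general {n : ℕ} (x : ℝ → EuclideanSpace ℝ (Fin n))
    (V1 V2 N1 N2 : EuclideanSpace ℝ (Fin n) → ℝ)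
    (h : ℝ → ℝ)
    (hN1 : ∀ y, 0 ≤ N1 y) (hN2 : ∀ y, 0 ≤ N2 y)
    (L : ℝ) (hL : 0 < L) (hslope : ∀ r, 0 ≤ r → h r ≤ L * r)
    (v1' v2' : ℝ → ℝ)
    (hd1 : ∀ t, 0 ≤ t → HasDerivAt (fun s => V1 (x s)) (v1' t) t)
    (hd2 : ∀ t, 0 ≤ t → HasDerivAt (fun s => V2 (x s)) (v2' t) t)
    (hineq1 : ∀ t, 0 ≤ t → v1' t ≤ -N1 (x t))
    (hineq2 : ∀ t, 0 ≤ t → v2' t ≤ -N2 (x t) + h (N1 (x t)))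
    (δ : ℝ) (hδ0 : 0 < δ) (hδL : δ < 1 / L) :
    0 < min (1 - δ * L) δ ∧
    ∀ t, 0 ≤ t →
      ∃ w', HasDerivAt (fun s => V1 (x s) + δ * V2 (x s)) w' t ∧
        w' ≤ -(min (1 - δ * L) δ) * (N1 (x t) + N2 (x t)) := by
  have hδL' : δ * L < 1 := (lt_div_iff₀ hL).1 hδL
  refine ⟨lt_min (sub_pos.2 hδL') hδ0, fun t ht =>
    ⟨_, (hd1 t ht).add ((hd2 t ht).const_mul δ), ?_⟩⟩
  calc v1' t + δ * v2' t ≤ -((1 - δ * L) * N1 (x t) + δ * N2 (x t)) :=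
        add_mul_le_of_le_neg_of_le_neg_add hδ0.le (hineq1 t ht) (hineq2 t ht)
          (hslope _ (hN1 _))
    _ ≤ -(min (1 - δ * L) δ) * (N1 (x t) + N2 (x t)) := by
        rw [neg_mul, neg_le_neg_iff]
        exact min_mul_add_le_mul_add_mul (hN1 _) (hN2 _)

theorem stmt_0 {n : ℕ} (x : ℝ → EuclideanSpace ℝ (Fin n))
    (V1 V2 N1 N2 : EuclideanSpace ℝ (Fin n) → ℝ)
    (h : ℝ → ℝ)
    (hN1 : ∀ y, 0 ≤ N1 y) (hN2 : ∀ y, 0 ≤ N2 y)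
    (hh : ∀ r, 0 ≤ h r) (hh0 : h 0 = 0)
    (L : ℝ) (hL : 0 < L) (hslope : ∀ r, 0 ≤ r → h r ≤ L * r)
    (v1' v2' : ℝ → ℝ)
    (hd1 : ∀ t, 0 ≤ t → HasDerivAt (fun s => V1 (x s)) (v1' t) t)
    (hd2 : ∀ t, 0 ≤ t → HasDerivAt (fun s => V2 (x s)) (v2' t) t)
    (hineq1 : ∀ t, 0 ≤ t → v1' t ≤ -N1 (x t))
    (hineq2 : ∀ t, 0 ≤ t → v2' t ≤ -N2 (x t) + h (N1 (x t)))
    (δ : ℝ) (hδ0 : 0 < δ) (hδL : δ < 1 / L) :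
    0 < min (1 - δ * L) δ ∧
    ∀ t, 0 ≤ t →
      ∃ w', HasDerivAt (fun s => V1 (x s) + δ * V2 (x s)) w' t ∧
        w' ≤ -(min (1 - δ * L) δ) * (N1 (x t) + N2 (x t)) :=
  stmt_0_general x V1 V2 N1 N2 h hN1 hN2 L hL hslope v1' v2' hd1 hd2 hineq1 hineq2 δ hδ0 hδL
end

section
/- Let x : ℝ → ℝ^n be a curve, V1, V2 : ℝ^n → ℝ, N1, N2 : ℝ^n → ℝ nonnegative functions, and h : ℝ → ℝ nonnegative with h(0) = 0. Suppose there is R > 0 with N1(x(t)) ≤ R for all t ≥ 0, and a constant L_R > 0 such that h(s) ≤ L_R·s for all s with 0 ≤ s ≤ R. Suppose that for every t ≥ 0 the maps t ↦ V1(x(t)) and t ↦ V2(x(t)) are differentiable with (d/dt)V1(x(t)) ≤ -N1(x(t)) and (d/dt)V2(x(t)) ≤ -N2(x(t)) + h(N1(x(t))). Then for every δ with 0 < δ < 1/L_R, setting W := V1 + δ·V2 and γ := min(1 - δ·L_R, δ), one has γ > 0 and, for all t ≥ 0, (d/dt)W(x(t)) ≤ -γ·(N1(x(t)) + N2(x(t))).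 -/
open Filter MeasureTheory

lemma mul_lt_one_of_pos_of_lt_one_div {δ L : ℝ} (hδ : 0 < δ) (hδL : δ < 1 / L) : δ * L < 1 := by
  have hL : 0 < L := one_div_pos.mp (hδ.trans hδL)
  exact (lt_div_iff₀ hL).mp hδL

lemma neg_mul_add_neg_mul_le_neg_min_mul {α β a b : ℝ} (ha : 0 ≤ a) (hb : 0 ≤ b) :
    -α * a + -β * b ≤ -(min α β) * (a + b) := by
  have hα : min α β * a ≤ α * a := mul_le_mul_of_nonneg_right (min_le_left α β) ha
  have hβ : min α β * b ≤ β * b := mul_le_mul_of_nonneg_right (min_le_right α β) hb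
  linarith

/-- The cross term `δ η ≤ δ L a` is absorbed by the dissipation `-a` of the first inequality,
leaving the weights `1 - δ L` on `a` and `δ` on `b`. -/
lemma add_mul_le_neg_min_mul_of_dissipation {a b v₁ v₂ η δ L : ℝ} (ha : 0 ≤ a) (hb : 0 ≤ b)
    (hδ : 0 ≤ δ) (h₁ : v₁ ≤ -a) (h₂ : v₂ ≤ -b + η) (hη : η ≤ L * a) :
    v₁ + δ * v₂ ≤ -(min (1 - δ * L) δ) * (a + b) := by
  have hδv₂ : δ * v₂ ≤ δ * (-b + L * a) :=
    mul_le_mul_of_nonneg_left (h₂.trans (by linarith)) hδ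
  calc v₁ + δ * v₂ ≤ -(1 - δ * L) * a + -δ * b := by linarith
    _ ≤ -(min (1 - δ * L) δ) * (a + b) := neg_mul_add_neg_mul_le_neg_min_mul ha hb

theorem stmt_3_general {n : ℕ} (x : ℝ → EuclideanSpace ℝ (Fin n))
    (V1 V2 N1 N2 : EuclideanSpace ℝ (Fin n) → ℝ)
    (h : ℝ → ℝ)
    (hN1 : ∀ y, 0 ≤ N1 y) (hN2 : ∀ y, 0 ≤ N2 y)
    (R : ℝ) (hbound : ∀ t, 0 ≤ t → N1 (x t) ≤ R)
    (LR : ℝ) (hslope : ∀ s, 0 ≤ s → s ≤ R → h s ≤ LR * s)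
    (v1' v2' : ℝ → ℝ)
    (hd1 : ∀ t, 0 ≤ t → HasDerivAt (fun s => V1 (x s)) (v1' t) t)
    (hd2 : ∀ t, 0 ≤ t → HasDerivAt (fun s => V2 (x s)) (v2' t) t)
    (hineq1 : ∀ t, 0 ≤ t → v1' t ≤ -N1 (x t))
    (hineq2 : ∀ t, 0 ≤ t → v2' t ≤ -N2 (x t) + h (N1 (x t)))
    (δ : ℝ) (hδ0 : 0 < δ) (hδL : δ < 1 / LR) :
    0 < min (1 - δ * LR) δ ∧
    ∀ t, 0 ≤ t →
      ∃ w', HasDerivAt (fun s => V1 (x s) + δ * V2 (x s)) w' t ∧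
        w' ≤ -(min (1 - δ * LR) δ) * (N1 (x t) + N2 (x t)) := by
  refine ⟨lt_min (sub_pos.mpr (mul_lt_one_of_pos_of_lt_one_div hδ0 hδL)) hδ0, fun t ht => ?_⟩
  exact ⟨v1' t + δ * v2' t, (hd1 t ht).add ((hd2 t ht).const_mul δ),
    add_mul_le_neg_min_mul_of_dissipation (hN1 (x t)) (hN2 (x t)) hδ0.le (hineq1 t ht)
      (hineq2 t ht) (hslope _ (hN1 (x t)) (hbound t ht))⟩

theorem stmt_3 {n : ℕ} (x : ℝ → EuclideanSpace ℝ (Fin n))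
    (V1 V2 N1 N2 : EuclideanSpace ℝ (Fin n) → ℝ)
    (h : ℝ → ℝ)
    (hN1 : ∀ y, 0 ≤ N1 y) (hN2 : ∀ y, 0 ≤ N2 y)
    (hh : ∀ r, 0 ≤ h r) (hh0 : h 0 = 0)
    (R : ℝ) (hR : 0 < R) (hbound : ∀ t, 0 ≤ t → N1 (x t) ≤ R)
    (LR : ℝ) (hLR : 0 < LR) (hslope : ∀ s, 0 ≤ s → s ≤ R → h s ≤ LR * s)
    (v1' v2' : ℝ → ℝ)
    (hd1 : ∀ t, 0 ≤ t → HasDerivAt (fun s => V1 (x s)) (v1' t) t)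
    (hd2 : ∀ t, 0 ≤ t → HasDerivAt (fun s => V2 (x s)) (v2' t) t)
    (hineq1 : ∀ t, 0 ≤ t → v1' t ≤ -N1 (x t))
    (hineq2 : ∀ t, 0 ≤ t → v2' t ≤ -N2 (x t) + h (N1 (x t)))
    (δ : ℝ) (hδ0 : 0 < δ) (hδL : δ < 1 / LR) :
    0 < min (1 - δ * LR) δ ∧
    ∀ t, 0 ≤ t →
      ∃ w', HasDerivAt (fun s => V1 (x s) + δ * V2 (x s)) w' t ∧
        w' ≤ -(min (1 - δ * LR) δ) * (N1 (x t) + N2 (x t)) :=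
  stmt_3_general x V1 V2 N1 N2 h hN1 hN2 R hbound LR hslope v1' v2' hd1 hd2 hineq1 hineq2 δ hδ0 hδL
end

section
/- Let x : ℝ → ℝ^n be a continuous curve, W : ℝ^n → ℝ, N1, N2 : ℝ^n → ℝ continuous nonnegative functions, γ > 0, and let E := { y ∈ ℝ^n : N1(y) = 0 and N2(y) = 0 } be nonempty. Suppose for every t ≥ 0 the map t ↦ W(x(t)) is differentiable with (d/dt)W(x(t)) ≤ -γ·(N1(x(t)) + N2(x(t))), W(x(t)) ≥ 0 for all t ≥ 0, and there exist T_U ≥ 0 and c > 0 such that N1(x(t)) + N2(x(t)) ≥ c·dist(x(t), E)² for all t ≥ T_U. Let W∞ := lim_{t→∞} W(x(t)) (which exists since t ↦ W(x(t)) is nonincreasing and bounded below). Then the function t ↦ dist(x(t), E)² is integrable on [T_U, ∞) with ∫_{T_U}^∞ dist(x(t), E)² dt ≤ (W(x(0)) - W∞)/(γ·c). -/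
open Filter MeasureTheory Set Topology

/-!
Dividing by `γ c`, the dissipation inequality and the error bound give
`(W ∘ x / (γ c))' ≤ -dist(x, E)²` on `[T_U, ∞)`. So `-(W ∘ x)' / (γ c)` dominates `dist(x, E)²`, and,
being the negated derivative of a convergent function, it is integrable on `(T_U, ∞)` with integral
`(W (x T_U) - W∞) / (γ c)`; finally `W (x T_U) ≤ W (x 0)` since `W ∘ x` is nonincreasing.
-/

theorem integrableOn_Ioi_and_integral_le_of_hasDerivAt_le_neg {f g g' : ℝ → ℝ} {a l : ℝ}
    (hf : AEStronglyMeasurable f (volume.restrict (Ioi a))) (hf₀ : ∀ x ∈ Ioi a, 0 ≤ f x)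
    (hderiv : ∀ x ∈ Ici a, HasDerivAt g (g' x) x) (hle : ∀ x ∈ Ioi a, g' x ≤ -f x)
    (hg : Tendsto g atTop (𝓝 l)) :
    IntegrableOn f (Ioi a) ∧ ∫ x in Ioi a, f x ≤ g a - l := by
  have hg'_nonpos : ∀ x ∈ Ioi a, g' x ≤ 0 := fun x hx => (hle x hx).trans (by simpa using hf₀ x hx)
  have hg'_int : IntegrableOn g' (Ioi a) := integrableOn_Ioi_deriv_of_nonpos' hderiv hg'_nonpos hg
  have hf_int : IntegrableOn f (Ioi a) := by
    refine hg'_int.neg.mono' hf (ae_restrict_of_forall_mem measurableSet_Ioi fun x hx => ?_)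
    rw [Real.norm_of_nonneg (hf₀ x hx)]
    exact le_neg.mpr (hle x hx)
  refine ⟨hf_int, ?_⟩
  calc ∫ x in Ioi a, f x ≤ ∫ x in Ioi a, -g' x :=
        setIntegral_mono_on hf_int hg'_int.neg measurableSet_Ioi fun x hx => le_neg.mpr (hle x hx)
    _ = g a - l := by
        rw [integral_neg, integral_Ioi_of_hasDerivAt_of_nonpos' hderiv hg'_nonpos hg, neg_sub]

theorem antitoneOn_Ici_of_hasDerivAt_nonpos {g g' : ℝ → ℝ} {a : ℝ}
    (hderiv : ∀ x ∈ Ici a, HasDerivAt g (g' x) x) (hg' : ∀ x ∈ Ioi a, g' x ≤ 0) :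
    AntitoneOn g (Ici a) := by
  refine antitoneOn_of_hasDerivWithinAt_nonpos (f' := g') (convex_Ici a)
    (fun x hx => (hderiv x hx).continuousAt.continuousWithinAt) (fun x hx => ?_) ?_
  · rw [interior_Ici] at hx ⊢
    exact (hderiv x (mem_Ici_of_Ioi hx)).hasDerivWithinAt
  · simpa only [interior_Ici] using hg'

theorem stmt_8_general {n : ℕ} (x : ℝ → EuclideanSpace ℝ (Fin n)) (hx : Continuous x)
    (W N1 N2 : EuclideanSpace ℝ (Fin n) → ℝ)
    (hN1 : ∀ y, 0 ≤ N1 y) (hN2 : ∀ y, 0 ≤ N2 y)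
    (γ : ℝ) (hγ : 0 < γ)
    (E : Set (EuclideanSpace ℝ (Fin n)))
    (w' : ℝ → ℝ)
    (hd : ∀ t, 0 ≤ t → HasDerivAt (fun s => W (x s)) (w' t) t)
    (hineq : ∀ t, 0 ≤ t → w' t ≤ -γ * (N1 (x t) + N2 (x t)))
    (TU : ℝ) (hTU : 0 ≤ TU) (c : ℝ) (hc : 0 < c)
    (heb : ∀ t, TU ≤ t → c * Metric.infDist (x t) E ^ 2 ≤ N1 (x t) + N2 (x t))
    (Winf : ℝ)
    (hWinf : Tendsto (fun t => W (x t)) atTop (nhds Winf)) :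
    IntegrableOn (fun t => Metric.infDist (x t) E ^ 2) (Set.Ici TU) ∧
    ∫ t in Set.Ici TU, Metric.infDist (x t) E ^ 2 ≤ (W (x 0) - Winf) / (γ * c) := by
  have hγc : 0 < γ * c := mul_pos hγ hc
  have hdist_cont : Continuous fun t => Metric.infDist (x t) E ^ 2 :=
    ((Metric.continuous_infDist_pt E).comp hx).pow 2
  have hW_anti : AntitoneOn (fun t => W (x t)) (Ici 0) :=
    antitoneOn_Ici_of_hasDerivAt_nonpos (fun t ht => hd t ht) fun t ht => by
      nlinarith [hineq t (le_of_lt ht), hN1 (x t), hN2 (x t)]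
  have hdecay : ∀ t ∈ Ioi TU, w' t / (γ * c) ≤ -Metric.infDist (x t) E ^ 2 := fun t ht => by
    rw [div_le_iff₀ hγc]
    nlinarith [hineq t (hTU.trans (le_of_lt ht)), heb t (le_of_lt ht)]
  obtain ⟨hint, hbound⟩ := integrableOn_Ioi_and_integral_le_of_hasDerivAt_le_neg
    hdist_cont.aestronglyMeasurable (fun t _ => sq_nonneg _)
    (fun t ht => (hd t (hTU.trans ht)).div_const (γ * c)) hdecay (hWinf.div_const (γ * c))
  refine ⟨(integrableOn_Ici_iff_integrableOn_Ioi).mpr hint, ?_⟩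
  rw [integral_Ici_eq_integral_Ioi]
  calc _ ≤ W (x TU) / (γ * c) - Winf / (γ * c) := hbound
    _ ≤ (W (x 0) - Winf) / (γ * c) := by
        rw [← sub_div]
        exact div_le_div_of_nonneg_right (by linarith [hW_anti self_mem_Ici hTU hTU]) hγc.le

theorem stmt_8 {n : ℕ} (x : ℝ → EuclideanSpace ℝ (Fin n)) (hx : Continuous x)
    (W N1 N2 : EuclideanSpace ℝ (Fin n) → ℝ)
    (hN1c : Continuous N1) (hN2c : Continuous N2)
    (hN1 : ∀ y, 0 ≤ N1 y) (hN2 : ∀ y, 0 ≤ N2 y)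
    (γ : ℝ) (hγ : 0 < γ)
    (E : Set (EuclideanSpace ℝ (Fin n)))
    (hE : E = {y | N1 y = 0 ∧ N2 y = 0})
    (hEne : E.Nonempty)
    (w' : ℝ → ℝ)
    (hd : ∀ t, 0 ≤ t → HasDerivAt (fun s => W (x s)) (w' t) t)
    (hineq : ∀ t, 0 ≤ t → w' t ≤ -γ * (N1 (x t) + N2 (x t)))
    (hWnn : ∀ t, 0 ≤ t → 0 ≤ W (x t))
    (TU : ℝ) (hTU : 0 ≤ TU) (c : ℝ) (hc : 0 < c)
    (heb : ∀ t, TU ≤ t → c * Metric.infDist (x t) E ^ 2 ≤ N1 (x t) + N2 (x t))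
    (Winf : ℝ)
    (hWinf : Tendsto (fun t => W (x t)) atTop (nhds Winf)) :
    IntegrableOn (fun t => Metric.infDist (x t) E ^ 2) (Set.Ici TU) ∧
    ∫ t in Set.Ici TU, Metric.infDist (x t) E ^ 2 ≤ (W (x 0) - Winf) / (γ * c) :=
  stmt_8_general x hx W N1 N2 hN1 hN2 γ hγ E w' hd hineq TU hTU c hc heb Winf hWinf
end

section
/- Let x : ℝ → ℝ^n be a continuous curve, W : ℝ^n → ℝ, N1, N2 : ℝ^n → ℝ continuous nonnegative functions, γ > 0, and let E := { y ∈ ℝ^n : N1(y) = 0 and N2(y) = 0 } be nonempty. Suppose for every t ≥ 0 the map t ↦ W(x(t)) is differentiable with (d/dt)W(x(t)) ≤ -γ·(N1(x(t)) + N2(x(t))), W(x(t)) ≥ 0 for all t ≥ 0, and there exist T_U ≥ 0 and c > 0 such that N1(x(t)) + N2(x(t)) ≥ c·dist(x(t), E)² for all t ≥ T_U. Let W∞ := lim_{t→∞} W(x(t)) and K := sqrt((W(x(0)) - W∞)/(γ·c)). Then for every T ≥ T_U with T > 0: (i) ∫_T^{2T} dist(x(t), E)² dt ≤ K², and (ii)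 there exists τ ∈ [T, 2T] with dist(x(τ), E) ≤ K/√T. -/
open Filter MeasureTheory Set

/-!
Along the trajectory `W ∘ x` is nonincreasing, and on `[T, 2T]` its derivative is bounded by
`-γ c dist(x, E)²` thanks to the error bound. Integrating, `γ c ∫_T^{2T} dist(x, E)²` is at most
the total decrease `W(x 0) - W∞`, which is (i). A minimiser `τ` of `dist(x, E)` on `[T, 2T]` then
satisfies `T dist(x τ, E)² ≤ K²`, which is (ii).
-/

theorem antitoneOn_Ici_of_hasDerivAt_nonpos_s9 {f f' : ℝ → ℝ} {a : ℝ}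
    (hf : ∀ t, a ≤ t → HasDerivAt f (f' t) t) (hf' : ∀ t, a ≤ t → f' t ≤ 0) :
    AntitoneOn f (Ici a) := by
  refine antitoneOn_of_hasDerivWithinAt_nonpos (f' := f') (convex_Ici a)
    (fun t ht => (hf t ht).continuousAt.continuousWithinAt) (fun t ht => ?_) (fun t ht => ?_)
  · rw [interior_Ici] at ht
    exact (hf t (le_of_lt ht)).hasDerivWithinAt
  · rw [interior_Ici] at ht
    exact hf' t (le_of_lt ht)

theorem AntitoneOn.le_of_tendsto_atTop {α β : Type*} [SemilatticeSup α] [Nonempty α]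
    [TopologicalSpace β] [Preorder β] [OrderClosedTopology β] {f : α → β} {a s : α} {l : β}
    (hf : AntitoneOn f (Ici a)) (hl : Tendsto f atTop (nhds l)) (hs : a ≤ s) : l ≤ f s :=
  le_of_tendsto hl <| (eventually_ge_atTop s).mono fun _ ht => hf hs (hs.trans ht) ht

theorem intervalIntegral_le_sub_of_hasDerivAt_of_le_neg {f f' φ : ℝ → ℝ} {a b : ℝ} (hab : a ≤ b)
    (hf : ∀ t ∈ Icc a b, HasDerivAt f (f' t) t) (hφ : IntegrableOn φ (Icc a b))
    (hφf : ∀ t ∈ Ioo a b, φ t ≤ -f' t) :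
    ∫ t in a..b, φ t ≤ f a - f b := by
  have := intervalIntegral.integral_le_sub_of_hasDeriv_right_of_le (g := -f) hab
    (fun t ht => (hf t ht).continuousAt.continuousWithinAt.neg)
    (fun t ht => (hf t (Ioo_subset_Icc_self ht)).neg.hasDerivWithinAt) hφ hφf
  simpa [neg_add_eq_sub] using this

theorem exists_mem_Icc_mul_le_setIntegral {g : ℝ → ℝ} {a b : ℝ} (hab : a ≤ b)
    (hg : ContinuousOn g (Icc a b)) : ∃ τ ∈ Icc a b, (b - a) * g τ ≤ ∫ t in Icc a b, g t := by
  obtain ⟨τ, hτ, hmin⟩ := isCompact_Icc.exists_isMinOn (nonempty_Icc.mpr hab) hg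
  refine ⟨τ, hτ, ?_⟩
  have := setIntegral_ge_of_const_le_real (μ := volume) measurableSet_Icc measure_Icc_lt_top.ne
    (fun t ht => hmin ht) hg.integrableOn_Icc
  rwa [Real.volume_real_Icc_of_le hab, mul_comm] at this

theorem stmt_9_general {n : ℕ} (x : ℝ → EuclideanSpace ℝ (Fin n)) (hx : Continuous x)
    (W N1 N2 : EuclideanSpace ℝ (Fin n) → ℝ)
    (hN1 : ∀ y, 0 ≤ N1 y) (hN2 : ∀ y, 0 ≤ N2 y)
    (γ : ℝ) (hγ : 0 < γ)
    (E : Set (EuclideanSpace ℝ (Fin n)))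
    (w' : ℝ → ℝ)
    (hd : ∀ t, 0 ≤ t → HasDerivAt (fun s => W (x s)) (w' t) t)
    (hineq : ∀ t, 0 ≤ t → w' t ≤ -γ * (N1 (x t) + N2 (x t)))
    (TU : ℝ) (c : ℝ) (hc : 0 < c)
    (heb : ∀ t, TU ≤ t → c * Metric.infDist (x t) E ^ 2 ≤ N1 (x t) + N2 (x t))
    (Winf : ℝ)
    (hWinf : Tendsto (fun t => W (x t)) atTop (nhds Winf))
    (K : ℝ) (hK : K = Real.sqrt ((W (x 0) - Winf) / (γ * c))) :
    ∀ T : ℝ, TU ≤ T → 0 < T →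
      (∫ t in Set.Icc T (2 * T), Metric.infDist (x t) E ^ 2 ≤ K ^ 2) ∧
      ∃ τ ∈ Set.Icc T (2 * T), Metric.infDist (x τ) E ≤ K / Real.sqrt T := by
  intro T hTU hT
  have hT2T : T ≤ 2 * T := by linarith
  have hdist : Continuous fun t => Metric.infDist (x t) E ^ 2 :=
    ((Metric.continuous_infDist_pt E).comp hx).pow 2
  have hanti : AntitoneOn (fun t => W (x t)) (Ici 0) :=
    antitoneOn_Ici_of_hasDerivAt_nonpos_s9 hd fun t ht => by
      nlinarith [hineq t ht, hN1 (x t), hN2 (x t)]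
  have hdecay : ∫ t in T..2 * T, γ * c * Metric.infDist (x t) E ^ 2 ≤ W (x T) - W (x (2 * T)) :=
    intervalIntegral_le_sub_of_hasDerivAt_of_le_neg hT2T (fun t ht => hd t (by linarith [ht.1]))
      (continuous_const.mul hdist).integrableOn_Icc fun t ht => by
        nlinarith [hineq t (by linarith [ht.1]), heb t (by linarith [ht.1])]
  have hW0 : Winf ≤ W (x 0) := hanti.le_of_tendsto_atTop hWinf le_rfl
  have hWT : W (x T) ≤ W (x 0) := hanti (mem_Ici.2 le_rfl) hT.le hT.le
  have hW2T : Winf ≤ W (x (2 * T)) := hanti.le_of_tendsto_atTop hWinf (by linarith)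
  have hK2 : K ^ 2 = (W (x 0) - Winf) / (γ * c) := by
    rw [hK, Real.sq_sqrt (div_nonneg (sub_nonneg.2 hW0) (by positivity))]
  have hintegral : ∫ t in Icc T (2 * T), Metric.infDist (x t) E ^ 2 ≤ K ^ 2 := by
    rw [integral_Icc_eq_integral_Ioc, ← intervalIntegral.integral_of_le hT2T, hK2,
      le_div_iff₀ (by positivity), mul_comm, ← intervalIntegral.integral_const_mul]
    linarith
  refine ⟨hintegral, ?_⟩
  obtain ⟨τ, hτ, hτ_mean⟩ := exists_mem_Icc_mul_le_setIntegral hT2T hdist.continuousOn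
  refine ⟨τ, hτ, ?_⟩
  rw [le_div_iff₀ (Real.sqrt_pos.mpr hT), hK, ← Real.sqrt_sq Metric.infDist_nonneg,
    ← Real.sqrt_mul (sq_nonneg _), ← hK2]
  exact Real.sqrt_le_sqrt (by linarith)

theorem stmt_9 {n : ℕ} (x : ℝ → EuclideanSpace ℝ (Fin n)) (hx : Continuous x)
    (W N1 N2 : EuclideanSpace ℝ (Fin n) → ℝ)
    (hN1c : Continuous N1) (hN2c : Continuous N2)
    (hN1 : ∀ y, 0 ≤ N1 y) (hN2 : ∀ y, 0 ≤ N2 y)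
    (γ : ℝ) (hγ : 0 < γ)
    (E : Set (EuclideanSpace ℝ (Fin n)))
    (hE : E = {y | N1 y = 0 ∧ N2 y = 0})
    (hEne : E.Nonempty)
    (w' : ℝ → ℝ)
    (hd : ∀ t, 0 ≤ t → HasDerivAt (fun s => W (x s)) (w' t) t)
    (hineq : ∀ t, 0 ≤ t → w' t ≤ -γ * (N1 (x t) + N2 (x t)))
    (hWnn : ∀ t, 0 ≤ t → 0 ≤ W (x t))
    (TU : ℝ) (hTU : 0 ≤ TU) (c : ℝ) (hc : 0 < c)
    (heb : ∀ t, TU ≤ t → c * Metric.infDist (x t) E ^ 2 ≤ N1 (x t) + N2 (x t))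
    (Winf : ℝ)
    (hWinf : Tendsto (fun t => W (x t)) atTop (nhds Winf))
    (K : ℝ) (hK : K = Real.sqrt ((W (x 0) - Winf) / (γ * c))) :
    ∀ T : ℝ, TU ≤ T → 0 < T →
      (∫ t in Set.Icc T (2 * T), Metric.infDist (x t) E ^ 2 ≤ K ^ 2) ∧
      ∃ τ ∈ Set.Icc T (2 * T), Metric.infDist (x τ) E ≤ K / Real.sqrt T :=
  stmt_9_general x hx W N1 N2 hN1 hN2 γ hγ E w' hd hineq TU c hc heb Winf hWinf K hK
end

section
/- Let x : ℝ → ℝ^n be a continuous curve, W : ℝ^n → ℝ, N1, N2 : ℝ^n → ℝ continuous nonnegative functions, γ > 0, and let E := { y ∈ ℝ^n : N1(y) = 0 and N2(y) = 0 } be nonempty. Suppose for every t ≥ 0 the map t ↦ W(x(t)) is differentiable with (d/dt)W(x(t)) ≤ -γ·(N1(x(t)) + N2(x(t))), W(x(t)) ≥ 0 for all t ≥ 0, and there exist T_U ≥ 0 and c > 0 such that N1(x(t)) + N2(x(t)) ≥ c·dist(x(t), E)² for all t ≥ T_U. Suppose moreover there exists t1 ≥ 0 such that t ↦ dist(x(t),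 E) is nonincreasing on [t1, ∞). Let W∞ := lim_{t→∞} W(x(t)) and K := sqrt((W(x(0)) - W∞)/(γ·c)). Then for every t ≥ max(2·T_U, 2·t1) with t > 0, one has dist(x(t), E) ≤ (√2·K)/√t. -/
/-!
Let `d(t) = dist(x(t), E)`. On `[0, ∞)` the Lyapunov function `W ∘ x` is nonincreasing, hence
bounded below by its limit `W∞`. On the window `[t/2, t]` the error bound and the monotonicity
of `d` give `(W ∘ x)' ≤ -γ c d(s)² ≤ -γ c d(t)²`, so `γ c d(t)² · t/2 ≤ W(x(t/2)) - W(x(t)) ≤ W(x(0)) - W∞`,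
which is `d(t)² ≤ 2K²/t`.
-/

open Filter MeasureTheory Set

theorem Convex.image_sub_le_mul_sub_of_hasDerivAt_le {D : Set ℝ} (hD : Convex ℝ D)
    {f f' : ℝ → ℝ} {C : ℝ} (hf : ∀ s ∈ D, HasDerivAt f (f' s) s) (hf' : ∀ s ∈ D, f' s ≤ C)
    {a b : ℝ} (ha : a ∈ D) (hb : b ∈ D) (hab : a ≤ b) : f b - f a ≤ C * (b - a) := by
  refine hD.image_sub_le_mul_sub_of_deriv_le
    (fun s hs => (hf s hs).continuousAt.continuousWithinAt)
    (fun s hs => (hf s (interior_subset hs)).differentiableAt.differentiableWithinAt)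
    (fun s hs => ?_) a ha b hb hab
  rw [(hf s (interior_subset hs)).deriv]
  exact hf' s (interior_subset hs)

theorem antitoneOn_of_hasDerivAt_nonpos {D : Set ℝ} (hD : Convex ℝ D) {f f' : ℝ → ℝ}
    (hf : ∀ s ∈ D, HasDerivAt f (f' s) s) (hf' : ∀ s ∈ D, f' s ≤ 0) : AntitoneOn f D :=
  fun a ha b hb hab => by
    simpa using hD.image_sub_le_mul_sub_of_hasDerivAt_le hf hf' ha hb hab

theorem AntitoneOn.le_of_tendsto_atTop_s10 {f : ℝ → ℝ} {a L : ℝ} (hf : AntitoneOn f (Ici a))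
    (hL : Tendsto f atTop (nhds L)) {s : ℝ} (hs : a ≤ s) : L ≤ f s :=
  le_of_tendsto hL <| (eventually_ge_atTop s).mono fun _ hu => hf hs (hs.trans hu) hu

theorem mul_sq_mul_le_sub_of_hasDerivAt {Φ Φ' d : ℝ → ℝ} {κ a b : ℝ} (hab : a ≤ b)
    (hκ : 0 ≤ κ) (hΦ : ∀ s ∈ Icc a b, HasDerivAt Φ (Φ' s) s)
    (hdiss : ∀ s ∈ Icc a b, Φ' s ≤ -κ * d s ^ 2) (hd : AntitoneOn d (Icc a b))
    (hd₀ : 0 ≤ d b) : κ * d b ^ 2 * (b - a) ≤ Φ a - Φ b := by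
  have hbound : ∀ s ∈ Icc a b, Φ' s ≤ -(κ * d b ^ 2) := fun s hs => by
    have hds : d b ≤ d s := hd hs (right_mem_Icc.2 hab) hs.2
    have : κ * d b ^ 2 ≤ κ * d s ^ 2 := by gcongr
    linarith [hdiss s hs]
  have := (convex_Icc a b).image_sub_le_mul_sub_of_hasDerivAt_le hΦ hbound
    (left_mem_Icc.2 hab) (right_mem_Icc.2 hab) hab
  linarith

theorem le_sqrt_two_mul_sqrt_div_sqrt {d A κ t : ℝ} (hκ : 0 < κ) (ht : 0 < t)
    (h : κ * d ^ 2 * (t / 2) ≤ A) : d ≤ Real.sqrt 2 * Real.sqrt (A / κ) / Real.sqrt t := by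
  rw [← Real.sqrt_mul zero_le_two, ← Real.sqrt_div' _ ht.le]
  apply Real.le_sqrt_of_sq_le
  rw [le_div_iff₀ ht, mul_div_assoc', le_div_iff₀ hκ]
  linarith

theorem stmt_10_general {n : ℕ} (x : ℝ → EuclideanSpace ℝ (Fin n))
    (W N1 N2 : EuclideanSpace ℝ (Fin n) → ℝ)
    (hN1 : ∀ y, 0 ≤ N1 y) (hN2 : ∀ y, 0 ≤ N2 y)
    (γ : ℝ) (hγ : 0 < γ)
    (E : Set (EuclideanSpace ℝ (Fin n)))
    (w' : ℝ → ℝ)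
    (hd : ∀ t, 0 ≤ t → HasDerivAt (fun s => W (x s)) (w' t) t)
    (hineq : ∀ t, 0 ≤ t → w' t ≤ -γ * (N1 (x t) + N2 (x t)))
    (TU : ℝ) (c : ℝ) (hc : 0 < c)
    (heb : ∀ t, TU ≤ t → c * Metric.infDist (x t) E ^ 2 ≤ N1 (x t) + N2 (x t))
    (t1 : ℝ)
    (hmono : ∀ s t : ℝ, t1 ≤ s → s ≤ t → Metric.infDist (x t) E ≤ Metric.infDist (x s) E)
    (Winf : ℝ)
    (hWinf : Tendsto (fun t => W (x t)) atTop (nhds Winf))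
    (K : ℝ) (hK : K = Real.sqrt ((W (x 0) - Winf) / (γ * c))) :
    ∀ t : ℝ, max (2 * TU) (2 * t1) ≤ t → 0 < t →
      Metric.infDist (x t) E ≤ Real.sqrt 2 * K / Real.sqrt t := by
  intro t ht htpos
  obtain ⟨hTU, ht1⟩ := max_le_iff.1 ht
  have hdecay : AntitoneOn (fun s => W (x s)) (Ici 0) :=
    antitoneOn_of_hasDerivAt_nonpos (convex_Ici 0) hd fun s hs => by
      nlinarith [hineq s hs, hN1 (x s), hN2 (x s)]
  have hwindow := mul_sq_mul_le_sub_of_hasDerivAt (d := fun s => Metric.infDist (x s) E)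
    (half_le_self htpos.le) (mul_pos hγ hc).le (fun s hs => hd s (by linarith [hs.1]))
    (fun s hs => by nlinarith [hineq s (by linarith [hs.1]), heb s (by linarith [hs.1])])
    (fun s hs s' _ hss' => hmono s s' (by linarith [hs.1]) hss') Metric.infDist_nonneg
  have hhalf : (0 : ℝ) ≤ t / 2 := by positivity
  have hstart : W (x (t / 2)) ≤ W (x 0) := hdecay (mem_Ici.2 le_rfl) hhalf hhalf
  have hlimit : Winf ≤ W (x t) := hdecay.le_of_tendsto_atTop_s10 hWinf htpos.le
  rw [hK]
  refine le_sqrt_two_mul_sqrt_div_sqrt (mul_pos hγ hc) htpos ?_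
  linarith [show t - t / 2 = t / 2 by ring]

theorem stmt_10 {n : ℕ} (x : ℝ → EuclideanSpace ℝ (Fin n)) (hx : Continuous x)
    (W N1 N2 : EuclideanSpace ℝ (Fin n) → ℝ)
    (hN1c : Continuous N1) (hN2c : Continuous N2)
    (hN1 : ∀ y, 0 ≤ N1 y) (hN2 : ∀ y, 0 ≤ N2 y)
    (γ : ℝ) (hγ : 0 < γ)
    (E : Set (EuclideanSpace ℝ (Fin n)))
    (hE : E = {y | N1 y = 0 ∧ N2 y = 0})
    (hEne : E.Nonempty)
    (w' : ℝ → ℝ)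
    (hd : ∀ t, 0 ≤ t → HasDerivAt (fun s => W (x s)) (w' t) t)
    (hineq : ∀ t, 0 ≤ t → w' t ≤ -γ * (N1 (x t) + N2 (x t)))
    (hWnn : ∀ t, 0 ≤ t → 0 ≤ W (x t))
    (TU : ℝ) (hTU : 0 ≤ TU) (c : ℝ) (hc : 0 < c)
    (heb : ∀ t, TU ≤ t → c * Metric.infDist (x t) E ^ 2 ≤ N1 (x t) + N2 (x t))
    (t1 : ℝ) (ht1 : 0 ≤ t1)
    (hmono : ∀ s t : ℝ, t1 ≤ s → s ≤ t → Metric.infDist (x t) E ≤ Metric.infDist (x s) E)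
    (Winf : ℝ)
    (hWinf : Tendsto (fun t => W (x t)) atTop (nhds Winf))
    (K : ℝ) (hK : K = Real.sqrt ((W (x 0) - Winf) / (γ * c))) :
    ∀ t : ℝ, max (2 * TU) (2 * t1) ≤ t → 0 < t →
      Metric.infDist (x t) E ≤ Real.sqrt 2 * K / Real.sqrt t :=
  stmt_10_general x W N1 N2 hN1 hN2 γ hγ E w' hd hineq TU c hc heb t1 hmono Winf hWinf K hK
end

section
/- Let x : ℝ → ℝ^n be a continuous curve, W : ℝ^n → ℝ, N1, N2 : ℝ^n → ℝ continuous nonnegative functions, γ > 0, and let E := { y ∈ ℝ^n : N1(y) = 0 and N2(y) = 0 } be nonempty. Suppose for every t ≥ 0 the map t ↦ W(x(t)) is differentiable with (d/dt)W(x(t)) ≤ -γ·(N1(x(t)) + N2(x(t))), W(x(t)) ≥ 0 for all t ≥ 0, there exist T_U ≥ 0 and c > 0 such that N1(x(t)) + N2(x(t)) ≥ c·dist(x(t), E)² for all t ≥ T_U, and t ↦ dist(x(t), E) is uniformly continuous on [0,∞). Let W∞ := lim_{t→∞} W(x(t)) and K := sqrt((W(x(0)) - W∞)/(γ·c)). Then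 for every ε > 0 there exists Δ > 0 such that for every T ≥ T_U with T > 0 there exists τ ∈ [T, 2T] with dist(x(s), E) ≤ K/√T + ε for all s ∈ [τ, τ + Δ]. -/
/-!
Along the trajectory `W ∘ x` decreases at rate at least `γ c dist(x, E)²` from time `T_U` on,
and its total drop is `W(x 0) - W∞ = γ c K²`. If `dist(x, E)` exceeded `K / √T` on all of
`[T, 2T]`, then `W ∘ x` would drop by more than `γ c K²` on that interval alone. So some
`τ ∈ [T, 2T]` has `dist(x τ, E) ≤ K / √T`, and uniform continuity keeps the distance within
`ε` of this value for a time `Δ` that depends only on `ε`.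
-/

open Filter Set

theorem AntitoneOn.le_of_tendsto_Ici {α β : Type*} [SemilatticeSup α] [Nonempty α]
    [TopologicalSpace β] [Preorder β] [ClosedIicTopology β] {f : α → β} {a : α} {L : β}
    (hf : AntitoneOn f (Ici a)) (hL : Tendsto f atTop (nhds L)) {t : α} (ht : a ≤ t) : L ≤ f t :=
  le_of_tendsto hL <| (eventually_ge_atTop t).mono fun _ hs => hf ht (ht.trans hs) hs

theorem exists_mem_Icc_le_of_hasDerivAt_le_neg {f f' g : ℝ → ℝ} {a b r : ℝ} (hab : a < b)
    (hf : ∀ t ∈ Icc a b, HasDerivAt f (f' t) t) (hf' : ∀ t ∈ Icc a b, f' t ≤ -g t)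
    (hdrop : f a - f b ≤ (b - a) * r) : ∃ t ∈ Icc a b, g t ≤ r := by
  by_contra! hg
  have hanti : StrictAntiOn (fun t => f t + t * r) (Icc a b) := by
    have hderiv : ∀ t ∈ Icc a b, HasDerivAt (fun t => f t + t * r) (f' t + r) t := fun t ht =>
      (hf t ht).add (hasDerivAt_mul_const r)
    refine strictAntiOn_of_hasDerivWithinAt_neg (convex_Icc a b)
      (fun t ht => (hderiv t ht).continuousAt.continuousWithinAt)
      (fun t ht => (hderiv t (interior_subset ht)).hasDerivWithinAt) fun t ht => ?_
    linarith [hf' t (interior_subset ht), hg t (interior_subset ht)]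
  have hend := hanti (left_mem_Icc.2 hab.le) (right_mem_Icc.2 hab.le) hab
  linarith [hend]

theorem UniformContinuousOn.exists_pos_forall_Icc_le_add {u : ℝ → ℝ} {a ε : ℝ}
    (hu : UniformContinuousOn u (Ici a)) (hε : 0 < ε) :
    ∃ Δ > 0, ∀ τ, a ≤ τ → ∀ s ∈ Icc τ (τ + Δ), u s ≤ u τ + ε := by
  obtain ⟨Δ, hΔ, hclose⟩ := Metric.uniformContinuousOn_iff_le.1 hu ε hε
  refine ⟨Δ, hΔ, fun τ hτ s hs => ?_⟩
  have hdist : dist s τ ≤ Δ := by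
    rw [Real.dist_eq, abs_of_nonneg (sub_nonneg.2 hs.1)]
    linarith [hs.2]
  linarith [(abs_le.1 (hclose s (hτ.trans hs.1) τ hτ hdist)).2]

theorem stmt_11_general {n : ℕ} (x : ℝ → EuclideanSpace ℝ (Fin n))
    (W N1 N2 : EuclideanSpace ℝ (Fin n) → ℝ)
    (hN1 : ∀ y, 0 ≤ N1 y) (hN2 : ∀ y, 0 ≤ N2 y)
    (γ : ℝ) (hγ : 0 < γ)
    (E : Set (EuclideanSpace ℝ (Fin n)))
    (w' : ℝ → ℝ)
    (hd : ∀ t, 0 ≤ t → HasDerivAt (fun s => W (x s)) (w' t) t)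
    (hineq : ∀ t, 0 ≤ t → w' t ≤ -γ * (N1 (x t) + N2 (x t)))
    (TU : ℝ) (c : ℝ) (hc : 0 < c)
    (heb : ∀ t, TU ≤ t → c * Metric.infDist (x t) E ^ 2 ≤ N1 (x t) + N2 (x t))
    (hu : UniformContinuousOn (fun t => Metric.infDist (x t) E) (Set.Ici 0))
    (Winf : ℝ)
    (hWinf : Tendsto (fun t => W (x t)) atTop (nhds Winf))
    (K : ℝ) (hK : K = Real.sqrt ((W (x 0) - Winf) / (γ * c))) :
    ∀ ε : ℝ, 0 < ε → ∃ Δ : ℝ, 0 < Δ ∧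
      ∀ T : ℝ, TU ≤ T → 0 < T →
        ∃ τ ∈ Set.Icc T (2 * T),
          ∀ s ∈ Set.Icc τ (τ + Δ),
            Metric.infDist (x s) E ≤ K / Real.sqrt T + ε := by
  intro ε hε
  obtain ⟨Δ, hΔ, hclose⟩ := hu.exists_pos_forall_Icc_le_add hε
  refine ⟨Δ, hΔ, fun T hTU hT => ?_⟩
  have hanti : AntitoneOn (fun t => W (x t)) (Ici 0) :=
    antitoneOn_of_hasDerivWithinAt_nonpos (convex_Ici 0)
      (fun t ht => (hd t ht).continuousAt.continuousWithinAt)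
      (fun t ht => (hd t (interior_subset ht)).hasDerivWithinAt) fun t ht => by
        linarith [hineq t (interior_subset ht),
          mul_nonneg hγ.le (add_nonneg (hN1 (x t)) (hN2 (x t)))]
  have hK2 : γ * c * K ^ 2 = W (x 0) - Winf := by
    have := hanti.le_of_tendsto_Ici hWinf le_rfl
    rw [hK, Real.sq_sqrt (div_nonneg (by linarith) (by positivity))]
    field_simp
  obtain ⟨τ, hτ, hτK⟩ := exists_mem_Icc_le_of_hasDerivAt_le_neg (by linarith : T < 2 * T)
    (g := fun t => γ * c * Metric.infDist (x t) E ^ 2) (r := γ * c * (K / Real.sqrt T) ^ 2)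
    (fun t ht => hd t (by linarith [ht.1]))
    (fun t ht => by nlinarith [hineq t (by linarith [ht.1]), heb t (hTU.trans ht.1)]) <| by
      have hdrop := hanti.le_of_tendsto_Ici hWinf (by linarith : (0 : ℝ) ≤ 2 * T)
      have hstart := hanti self_mem_Ici (mem_Ici.2 hT.le) hT.le
      rw [div_pow, Real.sq_sqrt hT.le]
      field_simp
      linarith
  refine ⟨τ, hτ, fun s hs => (hclose τ (by linarith [hτ.1]) s hs).trans ?_⟩
  have hKnn : 0 ≤ K / Real.sqrt T := hK ▸ by positivity
  gcongr
  exact (pow_le_pow_iff_left₀ Metric.infDist_nonneg hKnn two_ne_zero).1 <|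
    le_of_mul_le_mul_left hτK (by positivity)

theorem stmt_11 {n : ℕ} (x : ℝ → EuclideanSpace ℝ (Fin n)) (hx : Continuous x)
    (W N1 N2 : EuclideanSpace ℝ (Fin n) → ℝ)
    (hN1c : Continuous N1) (hN2c : Continuous N2)
    (hN1 : ∀ y, 0 ≤ N1 y) (hN2 : ∀ y, 0 ≤ N2 y)
    (γ : ℝ) (hγ : 0 < γ)
    (E : Set (EuclideanSpace ℝ (Fin n)))
    (hE : E = {y | N1 y = 0 ∧ N2 y = 0})
    (hEne : E.Nonempty)
    (w' : ℝ → ℝ)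
    (hd : ∀ t, 0 ≤ t → HasDerivAt (fun s => W (x s)) (w' t) t)
    (hineq : ∀ t, 0 ≤ t → w' t ≤ -γ * (N1 (x t) + N2 (x t)))
    (hWnn : ∀ t, 0 ≤ t → 0 ≤ W (x t))
    (TU : ℝ) (hTU : 0 ≤ TU) (c : ℝ) (hc : 0 < c)
    (heb : ∀ t, TU ≤ t → c * Metric.infDist (x t) E ^ 2 ≤ N1 (x t) + N2 (x t))
    (hu : UniformContinuousOn (fun t => Metric.infDist (x t) E) (Set.Ici 0))
    (Winf : ℝ)
    (hWinf : Tendsto (fun t => W (x t)) atTop (nhds Winf))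
    (K : ℝ) (hK : K = Real.sqrt ((W (x 0) - Winf) / (γ * c))) :
    ∀ ε : ℝ, 0 < ε → ∃ Δ : ℝ, 0 < Δ ∧
      ∀ T : ℝ, TU ≤ T → 0 < T →
        ∃ τ ∈ Set.Icc T (2 * T),
          ∀ s ∈ Set.Icc τ (τ + Δ),
            Metric.infDist (x s) E ≤ K / Real.sqrt T + ε :=
  stmt_11_general x W N1 N2 hN1 hN2 γ hγ E w' hd hineq TU c hc heb hu Winf hWinf K hK
end

section
/- Let n ∈ ℕ, let Φ : ℝ^n → ℝ be twice continuously differentiable, and let α, β > 0. Let x : ℝ → ℝ^n be twice differentiable and satisfy, for all t ∈ ℝ, the inertial gradient-like equation x''(t) + α·x'(t) + β·(D(∇Φ)(x(t)))(x'(t)) + ∇Φ(x(t)) = 0, where ∇Φ denotes the gradient of Φ and D(∇Φ)(y) the Fréchet derivative of ∇Φ at y (the Hessian operator). Define W : ℝ → ℝ by W(t) = (α·β + 1)·Φ(x(t)) + (1/2)·‖x'(t) + β·∇Φ(x(t))‖². Then for every t ∈ ℝ, W is differentiable at t with W'(t) = -α·‖x'(t)‖² - β·‖∇Φ(x(t))‖².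 -/
open scoped RealInnerProductSpace Gradient

section

variable {E : Type*} [NormedAddCommGroup E] [InnerProductSpace ℝ E] [CompleteSpace E]

theorem ContDiff.gradient {f : E → ℝ} {m n : WithTop ℕ∞} (hf : ContDiff ℝ n f)
    (hmn : m + 1 ≤ n) : ContDiff ℝ m (∇ f) :=
  (InnerProductSpace.toDual ℝ E).symm.contDiff.comp (hf.fderiv_right hmn)

theorem HasGradientAt.comp_hasDerivAt {f : E → ℝ} {f' : E} {γ : ℝ → E} {γ' : E} {t : ℝ}
    (hf : HasGradientAt f f' (γ t)) (hγ : HasDerivAt γ γ' t) :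
    HasDerivAt (fun s => f (γ s)) ⟪f', γ'⟫ t :=
  hf.hasFDerivAt.comp_hasDerivAt t hγ

theorem hasDerivAt_inertialNewton_energy {Φ : E → ℝ} (hΦ : ContDiff ℝ 2 Φ) {α β : ℝ}
    {x x' x'' : ℝ → E} (hx : ∀ t, HasDerivAt x (x' t) t) (hx' : ∀ t, HasDerivAt x' (x'' t) t)
    (heq : ∀ t, x'' t + α • x' t + β • (fderiv ℝ (∇ Φ) (x t)) (x' t) + ∇ Φ (x t) = 0) (t : ℝ) :
    HasDerivAt (fun s => (α * β + 1) * Φ (x s) + (1 / 2) * ‖x' s + β • ∇ Φ (x s)‖ ^ 2)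
      (-α * ‖x' t‖ ^ 2 - β * ‖∇ Φ (x t)‖ ^ 2) t := by
  have hΦx : HasDerivAt (fun s => Φ (x s)) ⟪∇ Φ (x t), x' t⟫ t :=
    ((hΦ.differentiable two_ne_zero) (x t)).hasGradientAt.comp_hasDerivAt (hx t)
  have hgx : HasDerivAt (fun s => ∇ Φ (x s)) (fderiv ℝ (∇ Φ) (x t) (x' t)) t :=
    ((hΦ.gradient (by norm_num)).differentiable one_ne_zero (x t)).hasFDerivAt.comp_hasDerivAt
      t (hx t)
  -- The Hessian term is the derivative of `β ∇Φ(x)`, so the equation reads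
  -- `(x' + β ∇Φ(x))' = -(α x' + ∇Φ(x))`.
  have hv : HasDerivAt (fun s => x' s + β • ∇ Φ (x s)) (-(α • x' t + ∇ Φ (x t))) t := by
    have hrhs : x'' t + β • fderiv ℝ (∇ Φ) (x t) (x' t) = -(α • x' t + ∇ Φ (x t)) := by
      linear_combination (norm := module) heq t
    exact hrhs ▸ (hx' t).add (hgx.const_smul β)
  refine ((hΦx.const_mul (α * β + 1)).add (hv.norm_sq.const_mul (1 / 2))).congr_deriv ?_
  simp only [inner_neg_right, inner_add_left, inner_add_right, real_inner_smul_left,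
    real_inner_smul_right, real_inner_self_eq_norm_sq, real_inner_comm (∇ Φ (x t))]
  ring

end

theorem stmt_13_general {n : ℕ} (Φ : EuclideanSpace ℝ (Fin n) → ℝ) (hΦ : ContDiff ℝ 2 Φ)
    (α β : ℝ)
    (x x' x'' : ℝ → EuclideanSpace ℝ (Fin n))
    (hx : ∀ t : ℝ, HasDerivAt x (x' t) t)
    (hx' : ∀ t : ℝ, HasDerivAt x' (x'' t) t)
    (heq : ∀ t : ℝ,
      x'' t + α • x' t + β • (fderiv ℝ (gradient Φ) (x t)) (x' t) + gradient Φ (x t) = 0) :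
    ∀ t : ℝ,
      HasDerivAt
        (fun s => (α * β + 1) * Φ (x s) + (1 / 2) * ‖x' s + β • gradient Φ (x s)‖ ^ 2)
        (-α * ‖x' t‖ ^ 2 - β * ‖gradient Φ (x t)‖ ^ 2) t :=
  hasDerivAt_inertialNewton_energy hΦ hx hx' heq

theorem stmt_13 {n : ℕ} (Φ : EuclideanSpace ℝ (Fin n) → ℝ) (hΦ : ContDiff ℝ 2 Φ)
    (α β : ℝ) (hα : 0 < α) (hβ : 0 < β)
    (x x' x'' : ℝ → EuclideanSpace ℝ (Fin n))
    (hx : ∀ t : ℝ, HasDerivAt x (x' t) t)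
    (hx' : ∀ t : ℝ, HasDerivAt x' (x'' t) t)
    (heq : ∀ t : ℝ,
      x'' t + α • x' t + β • (fderiv ℝ (gradient Φ) (x t)) (x' t) + gradient Φ (x t) = 0) :
    ∀ t : ℝ,
      HasDerivAt
        (fun s => (α * β + 1) * Φ (x s) + (1 / 2) * ‖x' s + β • gradient Φ (x s)‖ ^ 2)
        (-α * ‖x' t‖ ^ 2 - β * ‖gradient Φ (x t)‖ ^ 2) t :=
  stmt_13_general Φ hΦ α β x x' x'' hx hx' heq
end

section
/- Let n ∈ ℕ, let Φ : ℝ^n → ℝ be twice continuously differentiable and bounded below, and let α, β > 0. Let x : ℝ → ℝ^n be twice differentiable and satisfy, for all t ≥ 0, x''(t) + α·x'(t) + β·(D(∇Φ)(x(t)))(x'(t)) + ∇Φ(x(t)) = 0. Assume the trajectory is bounded: there exists R > 0 with ‖x(t)‖ ≤ R and ‖x'(t)‖ ≤ R for all t ≥ 0. Then x'(t) → 0 and ∇Φ(x(t)) → 0 as t → ∞. -/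
open Filter MeasureTheory

local notation "⟪" a ", " b "⟫" => @inner ℝ _ _ a b

/-- A Barbalat-type lemma: if `E' = -f` on `[0, ∞)`, `E` is bounded below there,
and `f` is nonnegative and Lipschitz on `[0, ∞)`, then `f → 0` at `+∞`. -/
lemma barbalat_aux {E f : ℝ → ℝ} {L C : ℝ} (hL : 0 < L)
    (hE : ∀ t : ℝ, 0 ≤ t → HasDerivAt E (-(f t)) t)
    (hf0 : ∀ t : ℝ, 0 ≤ t → 0 ≤ f t)
    (hlip : ∀ a b : ℝ, 0 ≤ a → 0 ≤ b → |f b - f a| ≤ L * |b - a|)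
    (hbd : ∀ t : ℝ, 0 ≤ t → C ≤ E t) :
    Tendsto f atTop (nhds 0) := by
  have hEanti : AntitoneOn E (Set.Ici (0:ℝ)) := by
    apply antitoneOn_of_deriv_nonpos (convex_Ici 0)
    · exact fun t ht => (hE t ht).differentiableAt.continuousAt.continuousWithinAt
    · intro t ht
      rw [interior_Ici] at ht
      exact (hE t ht.le).differentiableAt.differentiableWithinAt
    · intro t ht
      rw [interior_Ici] at ht
      rw [(hE t ht.le).deriv]
      simpa using hf0 t ht.le
  by_contra hcon
  rw [Metric.tendsto_atTop] at hcon
  push_neg at hcon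
  obtain ⟨ε, hε, hfreq⟩ := hcon
  have key : ∀ N : ℝ, ∃ t, max N 0 ≤ t ∧ ε ≤ f t := by
    intro N
    obtain ⟨t, ht, hd⟩ := hfreq (max N 0)
    refine ⟨t, ht, ?_⟩
    have h0t : (0:ℝ) ≤ t := le_trans (le_max_right N 0) ht
    rwa [Real.dist_eq, sub_zero, abs_of_nonneg (hf0 t h0t)] at hd
  set δ := ε / (2 * L) with hδdef
  have hδ : 0 < δ := div_pos hε (by positivity)
  have hLδ : L * δ = ε / 2 := by
    rw [hδdef]
    field_simp
  -- on an interval of length δ after a time where f ≥ ε, f stays ≥ ε/2, so E drops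
  have drop : ∀ t : ℝ, 0 ≤ t → ε ≤ f t → E (t + δ) ≤ E t - ε / 2 * δ := by
    intro t ht hft
    have hfl : ∀ s, t ≤ s → s ≤ t + δ → ε / 2 ≤ f s := by
      intro s hs1 hs2
      have h0s : (0:ℝ) ≤ s := le_trans ht hs1
      have h1 := hlip t s ht h0s
      have habs : |f s - f t| ≤ L * δ := by
        refine le_trans h1 ?_
        rw [abs_of_nonneg (by linarith)]
        nlinarith
      have h2 := abs_le.mp habs
      rw [hLδ] at h2
      linarith [h2.1]
    have hF : ∀ s : ℝ, 0 ≤ s → HasDerivAt (fun u => E u + ε / 2 * u) (-(f s) + ε / 2) s := by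
      intro s hs
      have h2 : HasDerivAt (fun u : ℝ => ε / 2 * u) (ε / 2) s := by
        simpa using (hasDerivAt_id s).const_mul (ε / 2)
      exact (hE s hs).add h2
    have hFanti : AntitoneOn (fun u => E u + ε / 2 * u) (Set.Icc t (t + δ)) := by
      apply antitoneOn_of_deriv_nonpos (convex_Icc _ _)
      · intro s hs
        exact (hF s (le_trans ht hs.1)).differentiableAt.continuousAt.continuousWithinAt
      · intro s hs
        rw [interior_Icc] at hs
        exact (hF s (le_trans ht hs.1.le)).differentiableAt.differentiableWithinAt
      · intro s hs
        rw [interior_Icc] at hs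
        rw [(hF s (le_trans ht hs.1.le)).deriv]
        have := hfl s hs.1.le hs.2.le
        linarith
    have hmem1 : t ∈ Set.Icc t (t + δ) := ⟨le_refl t, by linarith⟩
    have hmem2 : t + δ ∈ Set.Icc t (t + δ) := ⟨by linarith, le_refl _⟩
    have := hFanti hmem1 hmem2 (by linarith)
    simp only at this
    linarith
  obtain ⟨t0, ht0, hft0⟩ := key 0
  have ht0' : (0:ℝ) ≤ t0 := le_trans (le_max_right 0 0) ht0
  have main : ∀ N : ℕ, ∃ t : ℝ, 0 ≤ t ∧ E t ≤ E t0 - N * (ε / 2 * δ) := by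
    intro N
    induction N with
    | zero => exact ⟨t0, ht0', by simp⟩
    | succ k ih =>
      obtain ⟨t, ht, hEt⟩ := ih
      obtain ⟨s, hs, hfs⟩ := key t
      have hts : t ≤ s := le_trans (le_max_left t 0) hs
      have h0s : (0:ℝ) ≤ s := le_trans ht hts
      have h1 : E s ≤ E t := hEanti (Set.mem_Ici.mpr ht) (Set.mem_Ici.mpr h0s) hts
      have h2 := drop s h0s hfs
      refine ⟨s + δ, by linarith, ?_⟩
      push_cast
      nlinarith
  obtain ⟨N, hN⟩ := exists_nat_gt ((E t0 - C) / (ε / 2 * δ))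
  obtain ⟨t, ht, hEt⟩ := main N
  have hbt := hbd t ht
  have hpos : 0 < ε / 2 * δ := by positivity
  rw [div_lt_iff₀ hpos] at hN
  linarith

set_option maxHeartbeats 1600000 in
theorem stmt_15 {n : ℕ} (Φ : EuclideanSpace ℝ (Fin n) → ℝ) (hΦ : ContDiff ℝ 2 Φ)
    (hbdd : ∃ C : ℝ, ∀ y, C ≤ Φ y)
    (α β : ℝ) (hα : 0 < α) (hβ : 0 < β)
    (x x' x'' : ℝ → EuclideanSpace ℝ (Fin n))
    (hx : ∀ t : ℝ, HasDerivAt x (x' t) t)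
    (hx' : ∀ t : ℝ, HasDerivAt x' (x'' t) t)
    (heq : ∀ t : ℝ, 0 ≤ t →
      x'' t + α • x' t + β • (fderiv ℝ (gradient Φ) (x t)) (x' t) + gradient Φ (x t) = 0)
    (R : ℝ) (hR : 0 < R)
    (hxb : ∀ t : ℝ, 0 ≤ t → ‖x t‖ ≤ R)
    (hx'b : ∀ t : ℝ, 0 ≤ t → ‖x' t‖ ≤ R) :
    Tendsto x' atTop (nhds 0) ∧
    Tendsto (fun t => gradient Φ (x t)) atTop (nhds 0) := by
  obtain ⟨C, hC⟩ := hbdd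
  -- the gradient is C¹
  have hgrad_cd : ContDiff ℝ 1 (gradient Φ) := by
    have h1 : ContDiff ℝ 1 (fderiv ℝ Φ) := hΦ.fderiv_right (by norm_num)
    exact (InnerProductSpace.toDual ℝ (EuclideanSpace ℝ (Fin n))).symm.contDiff.comp h1
  have hgd : Differentiable ℝ (gradient Φ) := hgrad_cd.differentiable (by norm_num)
  set g : ℝ → EuclideanSpace ℝ (Fin n) := fun t => gradient Φ (x t) with hgdef
  set H : EuclideanSpace ℝ (Fin n) →
      (EuclideanSpace ℝ (Fin n) →L[ℝ] EuclideanSpace ℝ (Fin n)) :=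
    fun y => fderiv ℝ (gradient Φ) y with hHdef
  have hg : ∀ t, HasDerivAt g (H (x t) (x' t)) t := by
    intro t
    exact (hgd (x t)).hasFDerivAt.comp_hasDerivAt t (hx t)
  have hΦd : Differentiable ℝ Φ := hΦ.differentiable (by norm_num)
  have hΦx : ∀ t, HasDerivAt (fun t => Φ (x t)) ⟪g t, x' t⟫ t := by
    intro t
    have h1 : HasFDerivAt Φ (InnerProductSpace.toDual ℝ _ (g t)) (x t) :=
      (hΦd (x t)).hasGradientAt.hasFDerivAt
    have h2 := h1.comp_hasDerivAt t (hx t)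
    simp at h2
    exact h2
  set v : ℝ → EuclideanSpace ℝ (Fin n) := fun t => x' t + β • g t with hvdef
  have hv : ∀ t, HasDerivAt v (x'' t + β • H (x t) (x' t)) t := by
    intro t
    exact (hx' t).add ((hg t).const_smul β)
  set f : ℝ → ℝ := fun t => α * ⟪x' t, x' t⟫ + β * ⟪g t, g t⟫ with hfdef
  set En : ℝ → ℝ := fun t => (1 + α * β) * Φ (x t) + ⟪v t, v t⟫ / 2 with hEdef
  -- the vector identity from the ODE
  have hkey : ∀ t : ℝ, 0 ≤ t →
      x'' t + β • H (x t) (x' t) = -(α • x' t) - g t := by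
    intro t ht
    have h := heq t ht
    have h2 : (x'' t + β • H (x t) (x' t)) + (α • x' t + g t) = 0 := by
      rw [← h]; abel
    have h3 := eq_neg_of_add_eq_zero_left h2
    rw [h3]; abel
  -- energy decay
  have hEn : ∀ t : ℝ, 0 ≤ t → HasDerivAt En (-(f t)) t := by
    intro t ht
    have hd : HasDerivAt En ((1 + α * β) * ⟪g t, x' t⟫ +
        (⟪v t, x'' t + β • H (x t) (x' t)⟫ + ⟪x'' t + β • H (x t) (x' t), v t⟫) / 2) t :=
      ((hΦx t).const_mul (1 + α * β)).add (((hv t).inner ℝ (hv t)).div_const 2)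
    have heval : (1 + α * β) * ⟪g t, x' t⟫ +
        (⟪v t, x'' t + β • H (x t) (x' t)⟫ + ⟪x'' t + β • H (x t) (x' t), v t⟫) / 2
        = -(f t) := by
      rw [hkey t ht]
      simp only [hvdef, hfdef, inner_add_left, inner_add_right, inner_sub_left, inner_sub_right,
        inner_neg_left, inner_neg_right, real_inner_smul_left, real_inner_smul_right]
      rw [real_inner_comm (x' t) (g t)]
      ring
    rw [← heval]
    exact hd
  -- bounds on the gradient and the Hessian along the trajectory
  have hKc : IsCompact (Metric.closedBall (0 : EuclideanSpace ℝ (Fin n)) R) :=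
    isCompact_closedBall _ _
  have hKne : (Metric.closedBall (0 : EuclideanSpace ℝ (Fin n)) R).Nonempty :=
    ⟨0, Metric.mem_closedBall_self hR.le⟩
  obtain ⟨y1, -, hy1'⟩ := hKc.exists_isMaxOn hKne hgrad_cd.continuous.norm.continuousOn
  have hy1 := isMaxOn_iff.mp hy1'
  set Mg := ‖gradient Φ y1‖ with hMgdef
  have hMg0 : 0 ≤ Mg := norm_nonneg _
  have hHcont : Continuous H := (hgrad_cd.fderiv_right (m := 0) (by norm_num)).continuous
  obtain ⟨y2, -, hy2'⟩ := hKc.exists_isMaxOn hKne hHcont.norm.continuousOn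
  have hy2 := isMaxOn_iff.mp hy2'
  set MH := ‖H y2‖ with hMHdef
  have hMH0 : 0 ≤ MH := norm_nonneg _
  have hxK : ∀ t : ℝ, 0 ≤ t → x t ∈ Metric.closedBall (0 : EuclideanSpace ℝ (Fin n)) R :=
    fun t ht => mem_closedBall_zero_iff.mpr (hxb t ht)
  have hMg : ∀ t : ℝ, 0 ≤ t → ‖g t‖ ≤ Mg := fun t ht => hy1 _ (hxK t ht)
  have hMH : ∀ t : ℝ, 0 ≤ t → ‖H (x t)‖ ≤ MH := fun t ht => hy2 _ (hxK t ht)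
  have hHx' : ∀ t : ℝ, 0 ≤ t → ‖H (x t) (x' t)‖ ≤ MH * R := by
    intro t ht
    calc ‖H (x t) (x' t)‖ ≤ ‖H (x t)‖ * ‖x' t‖ := (H (x t)).le_opNorm _
    _ ≤ MH * R := mul_le_mul (hMH t ht) (hx'b t ht) (norm_nonneg _) hMH0
  set B := α * R + β * (MH * R) + Mg with hBdef
  have hx''b : ∀ t : ℝ, 0 ≤ t → ‖x'' t‖ ≤ B := by
    intro t ht
    have h2 : x'' t = -(α • x' t + β • H (x t) (x' t) + g t) := by
      have h := heq t ht
      have h3 : x'' t + (α • x' t + β • H (x t) (x' t) + g t) = 0 := by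
        rw [← h]; abel
      exact eq_neg_of_add_eq_zero_left h3
    rw [h2, norm_neg]
    have h4 : ‖α • x' t + β • H (x t) (x' t) + g t‖
        ≤ ‖α • x' t‖ + ‖β • H (x t) (x' t)‖ + ‖g t‖ := norm_add₃_le
    have h5 : ‖α • x' t‖ = α * ‖x' t‖ := by
      rw [norm_smul, Real.norm_eq_abs, abs_of_pos hα]
    have h6 : ‖β • H (x t) (x' t)‖ = β * ‖H (x t) (x' t)‖ := by
      rw [norm_smul, Real.norm_eq_abs, abs_of_pos hβ]
    have h7 := hx'b t ht
    have h8 := hHx' t ht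
    have h9 := hMg t ht
    rw [h5, h6] at h4
    have h10 : α * ‖x' t‖ ≤ α * R := by nlinarith [norm_nonneg (x' t)]
    have h11 : β * ‖H (x t) (x' t)‖ ≤ β * (MH * R) := by nlinarith [norm_nonneg (H (x t) (x' t))]
    rw [hBdef]
    linarith
  -- f is Lipschitz on [0, ∞)
  set L := 2 * α * (B * R) + 2 * β * (MH * R * Mg) + 1 with hLdef
  have hB0 : 0 ≤ B := le_trans (norm_nonneg _) (hx''b 0 le_rfl)
  have hL : 0 < L := by
    have h1 : 0 ≤ 2 * α * (B * R) := by positivity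
    have h2 : 0 ≤ 2 * β * (MH * R * Mg) := by positivity
    rw [hLdef]; linarith
  have hf' : ∀ t : ℝ, HasDerivAt f
      (α * (⟪x' t, x'' t⟫ + ⟪x'' t, x' t⟫) +
        β * (⟪g t, H (x t) (x' t)⟫ + ⟪H (x t) (x' t), g t⟫)) t := by
    intro t
    exact (((hx' t).inner ℝ (hx' t)).const_mul α).add (((hg t).inner ℝ (hg t)).const_mul β)
  have hlip : ∀ a b : ℝ, 0 ≤ a → 0 ≤ b → |f b - f a| ≤ L * |b - a| := by
    intro a b ha hb
    have h := Convex.norm_image_sub_le_of_norm_hasDerivWithin_le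
      (f := f)
      (f' := fun t => α * (⟪x' t, x'' t⟫ + ⟪x'' t, x' t⟫) +
        β * (⟪g t, H (x t) (x' t)⟫ + ⟪H (x t) (x' t), g t⟫))
      (s := Set.Ici (0:ℝ)) (C := L)
      (fun t _ => (hf' t).hasDerivWithinAt) ?_ (convex_Ici 0) ha hb
    · simpa [Real.norm_eq_abs] using h
    · intro t ht
      have ht' : (0:ℝ) ≤ t := ht
      have b1 : |⟪x' t, x'' t⟫| ≤ R * B := by
        calc |⟪x' t, x'' t⟫| ≤ ‖x' t‖ * ‖x'' t‖ := abs_real_inner_le_norm _ _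
        _ ≤ R * B := mul_le_mul (hx'b t ht') (hx''b t ht') (norm_nonneg _) hR.le
      have b2 : |⟪x'' t, x' t⟫| ≤ R * B := by
        rw [real_inner_comm]
        exact b1
      have b3 : |⟪g t, H (x t) (x' t)⟫| ≤ Mg * (MH * R) := by
        calc |⟪g t, H (x t) (x' t)⟫| ≤ ‖g t‖ * ‖H (x t) (x' t)‖ := abs_real_inner_le_norm _ _
        _ ≤ Mg * (MH * R) := mul_le_mul (hMg t ht') (hHx' t ht') (norm_nonneg _) hMg0
      have b4 : |⟪H (x t) (x' t), g t⟫| ≤ Mg * (MH * R) := by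
        rw [real_inner_comm]
        exact b3
      rw [Real.norm_eq_abs]
      calc |α * (⟪x' t, x'' t⟫ + ⟪x'' t, x' t⟫) +
          β * (⟪g t, H (x t) (x' t)⟫ + ⟪H (x t) (x' t), g t⟫)|
          ≤ |α * (⟪x' t, x'' t⟫ + ⟪x'' t, x' t⟫)| +
            |β * (⟪g t, H (x t) (x' t)⟫ + ⟪H (x t) (x' t), g t⟫)| := abs_add_le _ _
        _ ≤ α * (2 * (R * B)) + β * (2 * (Mg * (MH * R))) := by
            rw [abs_mul, abs_mul, abs_of_pos hα, abs_of_pos hβ]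
            have c1 : |⟪x' t, x'' t⟫ + ⟪x'' t, x' t⟫| ≤ 2 * (R * B) := by
              calc |⟪x' t, x'' t⟫ + ⟪x'' t, x' t⟫|
                  ≤ |⟪x' t, x'' t⟫| + |⟪x'' t, x' t⟫| := abs_add_le _ _
                _ ≤ 2 * (R * B) := by linarith
            have c2 : |⟪g t, H (x t) (x' t)⟫ + ⟪H (x t) (x' t), g t⟫| ≤ 2 * (Mg * (MH * R)) := by
              calc |⟪g t, H (x t) (x' t)⟫ + ⟪H (x t) (x' t), g t⟫|
                  ≤ |⟪g t, H (x t) (x' t)⟫| + |⟪H (x t) (x' t), g t⟫| := abs_add_le _ _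
                _ ≤ 2 * (Mg * (MH * R)) := by linarith
            have := mul_le_mul_of_nonneg_left c1 hα.le
            have := mul_le_mul_of_nonneg_left c2 hβ.le
            linarith
        _ ≤ L := by rw [hLdef]; nlinarith
  -- f is nonnegative, En is bounded below
  have hf0 : ∀ t : ℝ, 0 ≤ t → 0 ≤ f t := by
    intro t _
    have h1 := real_inner_self_nonneg (x := x' t)
    have h2 := real_inner_self_nonneg (x := g t)
    have h3 : 0 ≤ α * ⟪x' t, x' t⟫ := mul_nonneg hα.le h1
    have h4 : 0 ≤ β * ⟪g t, g t⟫ := mul_nonneg hβ.le h2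
    rw [hfdef]
    dsimp only
    linarith
  have hbdE : ∀ t : ℝ, 0 ≤ t → (1 + α * β) * C ≤ En t := by
    intro t _
    have h1 := real_inner_self_nonneg (x := v t)
    have h2 := hC (x t)
    have h3 : 0 < 1 + α * β := by nlinarith
    rw [hEdef]
    dsimp only
    nlinarith
  have htend : Tendsto f atTop (nhds 0) := barbalat_aux hL hEn hf0 hlip hbdE
  -- conclude
  have hx'sq : ∀ t : ℝ, ‖x' t‖ ≤ Real.sqrt (f t / α) := by
    intro t
    have h1 : ‖x' t‖ ^ 2 ≤ f t / α := by
      have h2 := real_inner_self_nonneg (x := g t)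
      have h3 : α * ‖x' t‖ ^ 2 ≤ f t := by
        rw [hfdef]
        dsimp only
        rw [real_inner_self_eq_norm_sq, real_inner_self_eq_norm_sq]
        nlinarith [sq_nonneg ‖g t‖, sq_nonneg ‖x' t‖]
      rw [le_div_iff₀ hα] at *
      nlinarith
    calc ‖x' t‖ = Real.sqrt (‖x' t‖ ^ 2) := by rw [Real.sqrt_sq (norm_nonneg _)]
    _ ≤ Real.sqrt (f t / α) := Real.sqrt_le_sqrt h1
  have hgsq : ∀ t : ℝ, ‖g t‖ ≤ Real.sqrt (f t / β) := by
    intro t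
    have h1 : ‖g t‖ ^ 2 ≤ f t / β := by
      have h2 := real_inner_self_nonneg (x := x' t)
      have h3 : β * ‖g t‖ ^ 2 ≤ f t := by
        rw [hfdef]
        dsimp only
        rw [real_inner_self_eq_norm_sq, real_inner_self_eq_norm_sq]
        nlinarith [sq_nonneg ‖g t‖, sq_nonneg ‖x' t‖]
      rw [le_div_iff₀ hβ] at *
      nlinarith
    calc ‖g t‖ = Real.sqrt (‖g t‖ ^ 2) := by rw [Real.sqrt_sq (norm_nonneg _)]
    _ ≤ Real.sqrt (f t / β) := Real.sqrt_le_sqrt h1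
  have hsqrt : ∀ c : ℝ, 0 < c → Tendsto (fun t => Real.sqrt (f t / c)) atTop (nhds 0) := by
    intro c hc
    have h1 : Tendsto (fun t => f t / c) atTop (nhds (0 / c)) := htend.div_const c
    rw [zero_div] at h1
    have h2 := (Real.continuous_sqrt.tendsto 0).comp h1
    rw [Real.sqrt_zero] at h2
    exact h2
  constructor
  · rw [tendsto_zero_iff_norm_tendsto_zero]
    exact squeeze_zero (fun t => norm_nonneg _) hx'sq (hsqrt α hα)
  · rw [tendsto_zero_iff_norm_tendsto_zero]
    exact squeeze_zero (fun t => norm_nonneg _) hgsq (hsqrt β hβ)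
end

section
/- Let n ∈ ℕ, let Φ : ℝ^n → ℝ be twice continuously differentiable and convex, let α, β > 0, and let z ∈ ℝ^n be a minimizer of Φ (Φ(z) ≤ Φ(y) for all y). Let x : ℝ → ℝ^n be twice differentiable and satisfy, for all t ≥ 0, x''(t) + α·x'(t) + β·(D(∇Φ)(x(t)))(x'(t)) + ∇Φ(x(t)) = 0. For ε with 0 < ε < min(2α/3, 2/β), define W_ε(t) = (α·β + 1)·Φ(x(t)) + (1/2)·‖x'(t) + β·∇Φ(x(t))‖² + ε·((α/2)·‖x(t) - z‖² + ⟨x'(t) + β·∇Φ(x(t)), x(t) - z⟩). Then for every t ≥ 0, W_ε is differentiable at t with W_ε'(t) ≤ -(α - (3/2)·ε)·‖x'(t)‖² - (β - (β²/2)·ε)·‖∇Φ(x(t))‖², and both coefficients α - (3/2)ε and β - (β²/2)ε are positive. -/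
open Filter MeasureTheory
open scoped RealInnerProductSpace
open Topology

lemma convexOn_deriv_le_sub {f : ℝ → ℝ} (hf : ConvexOn ℝ Set.univ f) {d : ℝ}
    (hd : HasDerivAt f d 0) : d ≤ f 1 - f 0 := by
  have htend : Tendsto (slope f 0) (𝓝[>] 0) (𝓝 d) :=
    (hasDerivAt_iff_tendsto_slope.mp hd).mono_left
      (nhdsWithin_mono _ (fun s hs => ne_of_gt hs))
  refine le_of_tendsto htend ?_
  filter_upwards [Ioc_mem_nhdsGT_of_mem (Set.left_mem_Ico.2 one_pos)] with s hs
  have hs0 : 0 < s := hs.1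
  have key := hf.2 (Set.mem_univ (1:ℝ)) (Set.mem_univ (0:ℝ)) hs0.le
    (by linarith [hs.2] : (0:ℝ) ≤ 1 - s) (by ring)
  simp only [smul_eq_mul, mul_one, mul_zero, add_zero] at key
  rw [slope_def_field, div_le_iff₀ (by simpa using hs0)]
  nlinarith [key]

set_option maxHeartbeats 1000000 in
theorem stmt_16 {n : ℕ} (Φ : EuclideanSpace ℝ (Fin n) → ℝ) (hΦ : ContDiff ℝ 2 Φ)
    (hconv : ConvexOn ℝ Set.univ Φ)
    (α β : ℝ) (hα : 0 < α) (hβ : 0 < β)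
    (z : EuclideanSpace ℝ (Fin n)) (hz : ∀ y, Φ z ≤ Φ y)
    (x x' x'' : ℝ → EuclideanSpace ℝ (Fin n))
    (hx : ∀ t : ℝ, HasDerivAt x (x' t) t)
    (hx' : ∀ t : ℝ, HasDerivAt x' (x'' t) t)
    (heq : ∀ t : ℝ, 0 ≤ t →
      x'' t + α • x' t + β • (fderiv ℝ (gradient Φ) (x t)) (x' t) + gradient Φ (x t) = 0)
    (ε : ℝ) (hε0 : 0 < ε) (hε : ε < min (2 * α / 3) (2 / β)) :
    0 < α - (3 / 2) * ε ∧ 0 < β - (β ^ 2 / 2) * ε ∧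
    ∀ t : ℝ, 0 ≤ t →
      ∃ w' : ℝ,
        HasDerivAt
          (fun s => (α * β + 1) * Φ (x s) + (1 / 2) * ‖x' s + β • gradient Φ (x s)‖ ^ 2 +
            ε * ((α / 2) * ‖x s - z‖ ^ 2 + ⟪x' s + β • gradient Φ (x s), x s - z⟫))
          w' t ∧
        w' ≤ -(α - (3 / 2) * ε) * ‖x' t‖ ^ 2 - (β - (β ^ 2 / 2) * ε) * ‖gradient Φ (x t)‖ ^ 2 := by
  have hε1 : ε < 2 * α / 3 := lt_of_lt_of_le hε (min_le_left _ _)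
  have hε2 : ε < 2 / β := lt_of_lt_of_le hε (min_le_right _ _)
  have hc2 : 0 < β - (β ^ 2 / 2) * ε := by
    have h1 : (β ^ 2 / 2) * ε < (β ^ 2 / 2) * (2 / β) :=
      mul_lt_mul_of_pos_left hε2 (by positivity)
    have h2 : (β ^ 2 / 2) * (2 / β) = β := by field_simp
    linarith
  refine ⟨by linarith, hc2, ?_⟩
  -- global facts
  have hΦd : Differentiable ℝ Φ := hΦ.differentiable (by norm_num)
  have hG1 : ContDiff ℝ 1 (gradient Φ) := by
    have h1 : ContDiff ℝ 1 (fderiv ℝ Φ) := hΦ.fderiv_right (by norm_num)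
    exact ((InnerProductSpace.toDual ℝ
      (EuclideanSpace ℝ (Fin n))).symm.toContinuousLinearEquiv.toContinuousLinearMap.contDiff).comp h1
  have hGd : Differentiable ℝ (gradient Φ) := hG1.differentiable one_ne_zero
  have hkey : ∀ y v, ⟪gradient Φ y, v⟫ = fderiv ℝ Φ y v := fun y v =>
    InnerProductSpace.toDual_symm_apply
  intro t ht
  set g : EuclideanSpace ℝ (Fin n) := gradient Φ (x t) with hgdef
  set a : EuclideanSpace ℝ (Fin n) := x' t with hadef
  set u : EuclideanSpace ℝ (Fin n) := x t - z with hudef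
  set D : EuclideanSpace ℝ (Fin n) := (fderiv ℝ (gradient Φ) (x t)) (x' t) with hDdef
  -- derivative of gradient composed with x
  have hgx : ∀ s : ℝ, HasDerivAt (fun r => gradient Φ (x r))
      ((fderiv ℝ (gradient Φ) (x s)) (x' s)) s := fun s =>
    ((hGd (x s)).hasFDerivAt).comp_hasDerivAt s (hx s)
  have hΦx : HasDerivAt (fun s => Φ (x s)) (⟪g, a⟫) t := by
    have := ((hΦd (x t)).hasFDerivAt).comp_hasDerivAt t (hx t)
    rwa [← hkey] at this
  have hv : HasDerivAt (fun s => x' s + β • gradient Φ (x s)) (x'' t + β • D) t :=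
    (hx' t).add ((hgx t).const_smul β)
  have hxz : HasDerivAt (fun s => x s - z) a t := (hx t).sub_const z
  -- derivative of the inner-product form of W
  have hW : HasDerivAt
      (fun s => (α * β + 1) * Φ (x s) + (1 / 2) * ⟪x' s + β • gradient Φ (x s), x' s + β • gradient Φ (x s)⟫ +
        ε * ((α / 2) * ⟪x s - z, x s - z⟫ + ⟪x' s + β • gradient Φ (x s), x s - z⟫))
      ((α * β + 1) * ⟪g, a⟫ +
        (1 / 2) * (⟪a + β • g, x'' t + β • D⟫ + ⟪x'' t + β • D, a + β • g⟫) +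
        ε * ((α / 2) * (⟪u, a⟫ + ⟪a, u⟫) + (⟪a + β • g, a⟫ + ⟪x'' t + β • D, u⟫))) t := by
    exact ((hΦx.const_mul _).add (((hv.inner ℝ hv)).const_mul _)).add
      ((((hxz.inner ℝ hxz).const_mul _).add (hv.inner ℝ hxz)).const_mul ε)

  -- rewrite in norm form
  simp only [real_inner_self_eq_norm_sq] at hW
  refine ⟨_, hW, ?_⟩
  -- equation of motion
  have hE : x'' t + β • D = -(α • a) - g := by
    have h := heq t ht
    have h2 : (x'' t + β • D) - (-(α • a) - g) = x'' t + α • a + β • D + g := by abel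
    exact sub_eq_zero.mp (by rw [h2, h])
  rw [hE]
  -- convexity: ⟪g, u⟫ ≥ 0
  have hgu : 0 ≤ ⟪g, u⟫ := by
    have h1 : HasDerivAt (fun s : ℝ => s • (z - x t) + x t) (z - x t) 0 := by
      simpa using ((hasDerivAt_id (0:ℝ)).smul_const (z - x t)).add_const (x t)
    have hline : HasDerivAt (fun s : ℝ => Φ (s • (z - x t) + x t))
        (fderiv ℝ Φ (x t) (z - x t)) 0 := by
      have h2 := ((hΦd (((0:ℝ) • (z - x t) + x t))).hasFDerivAt).comp_hasDerivAt 0 h1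
      simpa [Function.comp_def] using h2
    have hconvf : ConvexOn ℝ Set.univ (fun s : ℝ => Φ (s • (z - x t) + x t)) := by
      have h3 := hconv.comp_affineMap (AffineMap.lineMap (x t) z)
      simpa [Function.comp_def, AffineMap.lineMap_apply, vsub_eq_sub, vadd_eq_add] using h3
    have hd := convexOn_deriv_le_sub hconvf hline
    simp only [one_smul, zero_smul, zero_add, sub_add_cancel] at hd
    have hzle : Φ z - Φ (x t) ≤ 0 := by linarith [hz (x t)]
    have h4 : fderiv ℝ Φ (x t) (z - x t) ≤ 0 := le_trans hd hzle
    have h5 : ⟪g, z - x t⟫ ≤ 0 := by rw [hkey]; exact h4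
    have h6 : ⟪g, u⟫ = -⟪g, z - x t⟫ := by
      rw [hudef, show x t - z = -(z - x t) by abel, inner_neg_right]
    rw [h6]; linarith
  -- expand inner products
  simp only [inner_add_left, inner_add_right, inner_sub_left, inner_sub_right,
    inner_neg_left, inner_neg_right, real_inner_smul_left, real_inner_smul_right,
    real_inner_self_eq_norm_sq]
  have hag : ⟪a, g⟫ = ⟪g, a⟫ := real_inner_comm _ _
  have hua : ⟪u, a⟫ = ⟪a, u⟫ := real_inner_comm _ _
  have hug : ⟪u, g⟫ = ⟪g, u⟫ := real_inner_comm _ _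
  have hau : ⟪a, u⟫ = ⟪u, a⟫ := real_inner_comm _ _
  have hcs : ⟪g, a⟫ ≤ ‖g‖ * ‖a‖ := real_inner_le_norm _ _
  have hy : β * (‖g‖ * ‖a‖) ≤ (1/2) * ‖a‖^2 + (β^2/2) * ‖g‖^2 := by
    nlinarith [sq_nonneg (‖a‖ - β * ‖g‖)]
  have hfact1 : 0 ≤ ε * ⟪g, u⟫ := mul_nonneg hε0.le hgu
  have hfact2 : ε * (β * ⟪g, a⟫) ≤ ε * ((1/2) * ‖a‖^2 + (β^2/2) * ‖g‖^2) :=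
    mul_le_mul_of_nonneg_left
      (le_trans (mul_le_mul_of_nonneg_left hcs hβ.le) hy) hε0.le
  simp only [hag, hau, hug]
  nlinarith [hfact1, hfact2]
end

section
/- Let n ∈ ℕ, let Φ : ℝ^n → ℝ be twice continuously differentiable and convex with a nonempty set of minimizers, and let α, β > 0. Let x : ℝ → ℝ^n be twice differentiable and satisfy, for all t ≥ 0, x''(t) + α·x'(t) + β·(D(∇Φ)(x(t)))(x'(t)) + ∇Φ(x(t)) = 0, and assume there exists R > 0 with ‖x(t)‖ ≤ R and ‖x'(t)‖ ≤ R for all t ≥ 0. Then for every minimizer z of Φ, the limit lim_{t→∞} ‖x(t) - z‖ exists. -/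
open Filter MeasureTheory

/-!
Along a trajectory the energy `‖x'‖²/2 + Φ(x)` decreases at rate at least `α‖x'‖²`, so `‖x'‖²`
is integrable. For a minimizer `z` let `h = ‖x - z‖²/2` and let
`D = Φ z - Φ x - ⟪∇Φ x, z - x⟫ ≥ 0` be the Bregman divergence. The equation gives
`(h' + αh + βD)' = ‖x'‖² - ⟪∇Φ x, x - z⟫ ≤ ‖x'‖² - D`, so `h' + αh + βD` converges and `D` is
integrable. Since `D' = ⟪∇²Φ(x) x', x - z⟫` is bounded, `D → 0` (Barbalat), hence `h' + αh`
converges, and then so does `h`.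
-/

open Set Topology RealInnerProductSpace
open scoped Gradient

lemma monotoneOn_Ici_of_hasDerivAt {f f' : ℝ → ℝ} {a : ℝ}
    (hf : ∀ t, HasDerivAt f (f' t) t) (hf' : ∀ t, a ≤ t → 0 ≤ f' t) : MonotoneOn f (Ici a) :=
  monotoneOn_of_hasDerivWithinAt_nonneg (convex_Ici a)
    (fun t _ => (hf t).continuousAt.continuousWithinAt) (fun t _ => (hf t).hasDerivWithinAt)
    (fun t ht => hf' t (interior_subset ht))

lemma antitoneOn_Ici_of_hasDerivAt {f f' : ℝ → ℝ} {a : ℝ}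
    (hf : ∀ t, HasDerivAt f (f' t) t) (hf' : ∀ t, a ≤ t → f' t ≤ 0) : AntitoneOn f (Ici a) :=
  antitoneOn_of_hasDerivWithinAt_nonpos (convex_Ici a)
    (fun t _ => (hf t).continuousAt.continuousWithinAt) (fun t _ => (hf t).hasDerivWithinAt)
    (fun t ht => hf' t (interior_subset ht))

lemma exists_tendsto_of_monotoneOn_Ici {f : ℝ → ℝ} {a C : ℝ} (hf : MonotoneOn f (Ici a))
    (hC : ∀ t, a ≤ t → f t ≤ C) : ∃ l, Tendsto f atTop (𝓝 l) := by
  have hmono : Monotone fun t => f (max a t) := fun s t hst =>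
    hf (le_max_left a s) (le_max_left a t) (max_le_max le_rfl hst)
  have hbdd : BddAbove (range fun t => f (max a t)) :=
    ⟨C, by rintro _ ⟨t, rfl⟩; exact hC _ (le_max_left a t)⟩
  refine ⟨_, (tendsto_atTop_ciSup hmono hbdd).congr' ?_⟩
  filter_upwards [eventually_ge_atTop a] with t ht
  rw [max_eq_right ht]

lemma exists_tendsto_of_hasDerivAt_nonneg {f f' : ℝ → ℝ} {a C : ℝ}
    (hf : ∀ t, HasDerivAt f (f' t) t) (hf' : ∀ t, a ≤ t → 0 ≤ f' t)
    (hC : ∀ t, a ≤ t → f t ≤ C) : ∃ l, Tendsto f atTop (𝓝 l) :=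
  exists_tendsto_of_monotoneOn_Ici (monotoneOn_Ici_of_hasDerivAt hf hf') hC

lemma tendsto_zero_of_hasDerivAt_add_mul {h h' : ℝ → ℝ} {α : ℝ} (hα : 0 < α)
    (hh : ∀ t, HasDerivAt h (h' t) t) (hlim : Tendsto (fun t => h' t + α * h t) atTop (𝓝 0)) :
    Tendsto h atTop (𝓝 0) := by
  rw [Metric.tendsto_atTop]
  intro ε hε
  obtain ⟨T, hT⟩ := Metric.tendsto_atTop.1 hlim (α * ε / 2) (by positivity)
  set v : ℝ → ℝ := fun t => h t * Real.exp (α * t)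
  have hexp : ∀ t, HasDerivAt (fun s => Real.exp (α * s)) (α * Real.exp (α * t)) t :=
    fun t => by simpa [mul_comm] using ((hasDerivAt_id t).const_mul α).exp
  have hv : ∀ t, HasDerivAt v ((h' t + α * h t) * Real.exp (α * t)) t := fun t =>
    ((hh t).fun_mul (hexp t)).congr_deriv (by ring)
  have hfence : ∀ t, T ≤ t → |v t - v T| ≤ ε / 2 * (Real.exp (α * t) - Real.exp (α * T)) :=
    fun t ht => image_norm_le_of_norm_deriv_right_le_deriv_boundary (a := T) (b := t)
      (f := fun s => v s - v T) (B := fun s => ε / 2 * (Real.exp (α * s) - Real.exp (α * T)))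
      (fun s _ => ((hv s).sub_const _).continuousAt.continuousWithinAt)
      (fun s _ => ((hv s).sub_const _).hasDerivWithinAt) (by simp)
      (fun s => ((hexp s).sub_const _).const_mul _)
      (fun s hs => by
        have := (hT s hs.1).le
        rw [Real.dist_eq, sub_zero] at this
        rw [Real.norm_eq_abs, abs_mul, Real.abs_exp]
        nlinarith [Real.exp_pos (α * s)])
      ⟨ht, le_rfl⟩
  have htail : Tendsto (fun t => |v T| * Real.exp (-(α * t))) atTop (𝓝 0) := by
    simpa using (Real.tendsto_exp_neg_atTop_nhds_zero.comp
      (tendsto_id.const_mul_atTop hα)).const_mul |v T|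
  obtain ⟨N, hN⟩ := Metric.tendsto_atTop.1 htail (ε / 2) (by positivity)
  refine ⟨max T N, fun t ht => ?_⟩
  have h1 := hfence t (le_of_max_le_left ht)
  have h2 := hN t (le_of_max_le_right ht)
  rw [Real.dist_eq, sub_zero, abs_of_nonneg (by positivity)] at h2
  have hht : h t = v t * Real.exp (-(α * t)) := by
    simp only [v, mul_assoc, ← Real.exp_add, add_neg_cancel, Real.exp_zero, mul_one]
  rw [Real.dist_eq, sub_zero, hht, abs_mul, Real.abs_exp]
  have : |v t| ≤ |v T| + ε / 2 * Real.exp (α * t) := by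
    have := abs_sub_abs_le_abs_sub (v t) (v T)
    nlinarith [Real.exp_pos (α * T)]
  calc |v t| * Real.exp (-(α * t))
      ≤ (|v T| + ε / 2 * Real.exp (α * t)) * Real.exp (-(α * t)) := by gcongr
    _ = |v T| * Real.exp (-(α * t)) + ε / 2 := by
      rw [add_mul, mul_assoc, ← Real.exp_add, add_neg_cancel, Real.exp_zero, mul_one]
    _ < ε := by linarith

lemma tendsto_of_hasDerivAt_add_mul {h h' : ℝ → ℝ} {α c : ℝ} (hα : 0 < α)
    (hh : ∀ t, HasDerivAt h (h' t) t) (hlim : Tendsto (fun t => h' t + α * h t) atTop (𝓝 c)) :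
    Tendsto h atTop (𝓝 (c / α)) := by
  have hlim' : Tendsto (fun t => h' t + α * (h t - c / α)) atTop (𝓝 0) := by
    convert hlim.sub_const c using 2 with t
    · field_simp; ring
    · simp
  simpa using (tendsto_zero_of_hasDerivAt_add_mul hα (fun t => (hh t).sub_const (c / α))
    hlim').add_const (c / α)

lemma mul_le_sub_add_of_abs_deriv_le {p p' P : ℝ → ℝ} {M t δ : ℝ}
    (hp : ∀ u, HasDerivAt p (p' u) u) (hp' : ∀ u, t ≤ u → |p' u| ≤ M)
    (hP : ∀ u, HasDerivAt P (p u) u) (hδ : 0 ≤ δ) :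
    δ * p t ≤ P (t + δ) - P t + M * δ ^ 2 / 2 := by
  have hlow : ∀ u, t ≤ u → p t - M * (u - t) ≤ p u := by
    have hmono := monotoneOn_Ici_of_hasDerivAt (a := t)
      (fun u => (hp u).fun_add ((hasDerivAt_id' u).const_mul M))
      (fun u hu => by linarith [(abs_le.1 (hp' u hu)).1, mul_one M])
    intro u hu
    have := hmono self_mem_Ici hu hu
    dsimp only at this
    linarith
  have hQ : ∀ u, HasDerivAt (fun u => P u - p t * u + M * (u - t) ^ 2 / 2)
      (p u - p t + M * (u - t)) u := fun u =>
    ((hP u).fun_sub ((hasDerivAt_id' u).const_mul (p t))).fun_add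
      ((((hasDerivAt_id' u).sub_const t).fun_pow 2).const_mul M |>.div_const 2)
      |>.congr_deriv (by ring)
  have := monotoneOn_Ici_of_hasDerivAt hQ (fun u hu => by linarith [hlow u hu])
    self_mem_Ici (show t ≤ t + δ by linarith) (by linarith)
  simp only [sub_self, add_sub_cancel_left] at this
  nlinarith

theorem tendsto_zero_of_abs_deriv_le_of_primitive_le {p p' P : ℝ → ℝ} {M C : ℝ}
    (hp : ∀ t, HasDerivAt p (p' t) t) (hp' : ∀ t, 0 ≤ t → |p' t| ≤ M)
    (hp0 : ∀ t, 0 ≤ t → 0 ≤ p t) (hP : ∀ t, HasDerivAt P (p t) t)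
    (hPC : ∀ t, 0 ≤ t → P t ≤ C) : Tendsto p atTop (𝓝 0) := by
  obtain ⟨S, hS⟩ := exists_tendsto_of_hasDerivAt_nonneg hP hp0 hPC
  have hM : 0 ≤ M := (abs_nonneg _).trans (hp' 0 le_rfl)
  rw [tendsto_order]
  refine ⟨fun a ha => ?_, fun ε hε => ?_⟩
  · filter_upwards [eventually_ge_atTop 0] with t ht
    exact ha.trans_le (hp0 t ht)
  set δ := ε / (M + 1)
  have hδ : 0 < δ := by positivity
  have hMδ : M * δ < ε := by
    rw [mul_div_assoc', div_lt_iff₀ (by positivity)]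
    nlinarith
  have hinc : Tendsto (fun t => P (t + δ) - P t) atTop (𝓝 0) := by
    simpa using (hS.comp (tendsto_atTop_add_const_right _ δ tendsto_id)).sub hS
  filter_upwards [hinc.eventually (gt_mem_nhds (show 0 < δ * ε / 2 by positivity)),
    eventually_ge_atTop 0] with t hsmall ht
  have hstep := mul_le_sub_add_of_abs_deriv_le hp (fun u hu => hp' u (ht.trans hu)) hP hδ.le
  have hMδ' : δ * (M * δ) < δ * ε := mul_lt_mul_of_pos_left hMδ hδ
  exact lt_of_mul_lt_mul_left (by nlinarith) hδ.le

theorem exists_tendsto_of_lyapunov {h h₁ p p' F' a A : ℝ → ℝ} {α β M C c : ℝ}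
    (hα : 0 < α) (hβ : 0 ≤ β) (hh : ∀ t, HasDerivAt h (h₁ t) t)
    (hp : ∀ t, HasDerivAt p (p' t) t)
    (hF : ∀ t, HasDerivAt (fun t => h₁ t + α * h t + β * p t) (F' t) t)
    (hA : ∀ t, HasDerivAt A (a t) t) (hF' : ∀ t, 0 ≤ t → F' t ≤ a t - p t)
    (ha : ∀ t, 0 ≤ t → 0 ≤ a t) (hAC : ∀ t, 0 ≤ t → A t ≤ C)
    (hp0 : ∀ t, 0 ≤ t → 0 ≤ p t) (hp' : ∀ t, 0 ≤ t → |p' t| ≤ M)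
    (hh0 : ∀ t, 0 ≤ t → 0 ≤ h t) (hh₁ : ∀ t, 0 ≤ t → c ≤ h₁ t) :
    ∃ l, Tendsto h atTop (𝓝 l) := by
  set F := fun t => h₁ t + α * h t + β * p t
  have hFc : ∀ t, 0 ≤ t → c ≤ F t := fun t ht => by
    linarith [hh₁ t ht, mul_nonneg hα.le (hh0 t ht), mul_nonneg hβ (hp0 t ht)]
  obtain ⟨lA, hlA⟩ := exists_tendsto_of_hasDerivAt_nonneg hA ha hAC
  obtain ⟨lAF, hlAF⟩ := exists_tendsto_of_hasDerivAt_nonneg (fun t => (hA t).fun_sub (hF t))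
    (fun t ht => by linarith [hF' t ht, hp0 t ht]) (fun t ht => by
      linarith [hAC t ht, hFc t ht] : ∀ t, 0 ≤ t → A t - F t ≤ C - c)
  have hpc : Continuous p := continuous_iff_continuousAt.2 fun t => (hp t).continuousAt
  set P := fun t => ∫ s in (0 : ℝ)..t, p s
  have hP : ∀ t, HasDerivAt P (p t) t := fun t => (hpc.integral_hasStrictDerivAt 0 t).hasDerivAt
  have hPC : ∀ t, 0 ≤ t → P t ≤ C - c - (A 0 - F 0) := fun t ht => by
    have := monotoneOn_Ici_of_hasDerivAt (fun t => ((hA t).fun_sub (hF t)).fun_sub (hP t))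
      (fun t ht => by linarith [hF' t ht]) self_mem_Ici ht ht
    simp only [P, intervalIntegral.integral_same] at this
    linarith [hAC t ht, hFc t ht]
  have hplim := tendsto_zero_of_abs_deriv_le_of_primitive_le hp hp' hp0 hP hPC
  have hlim : Tendsto (fun t => h₁ t + α * h t) atTop (𝓝 (lA - lAF)) := by
    convert (hlA.sub hlAF).sub (hplim.const_mul β) using 2 with t
    · simp only [F]; ring
    · ring
  exact ⟨_, tendsto_of_hasDerivAt_add_mul hα hh hlim⟩

section Convex

variable {E : Type*} [NormedAddCommGroup E] [InnerProductSpace ℝ E] [CompleteSpace E]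

lemma ContDiff.contDiff_gradient {f : E → ℝ} {n : WithTop ℕ∞} (hf : ContDiff ℝ (n + 1) f) :
    ContDiff ℝ n (∇ f) :=
  (InnerProductSpace.toDual ℝ E).symm.contDiff.comp (hf.fderiv_right le_rfl)

lemma HasGradientAt.hasDerivAt_comp {f : E → ℝ} {f' x' : E} {x : ℝ → E} {t : ℝ}
    (hf : HasGradientAt f f' (x t)) (hx : HasDerivAt x x' t) :
    HasDerivAt (fun s => f (x s)) ⟪f', x'⟫ t :=
  hf.hasFDerivAt.comp_hasDerivAt t hx

lemma ConvexOn.add_inner_gradient_le {f : E → ℝ} (hf : ConvexOn ℝ univ f) {a : E}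
    (ha : DifferentiableAt ℝ f a) (b : E) : f a + ⟪∇ f a, b - a⟫ ≤ f b := by
  have hline : ConvexOn ℝ univ (f ∘ AffineMap.lineMap (k := ℝ) a b) := by
    simpa using hf.comp_affineMap (AffineMap.lineMap (k := ℝ) a b)
  have hderiv : HasDerivAt (f ∘ AffineMap.lineMap (k := ℝ) a b) ⟪∇ f a, b - a⟫ 0 := by
    have ha' : HasGradientAt f (∇ f a) (AffineMap.lineMap a b (0 : ℝ)) := by
      simpa using ha.hasGradientAt
    exact ha'.hasDerivAt_comp AffineMap.hasDerivAt_lineMap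
  have := hline.le_slope_of_hasDerivAt (mem_univ 0) (mem_univ 1) zero_lt_one hderiv
  simp only [slope_def_field, Function.comp_apply, AffineMap.lineMap_apply_zero,
    AffineMap.lineMap_apply_one, sub_zero, div_one] at this
  linarith

lemma ConvexOn.inner_gradient_sub_gradient_nonneg {f : E → ℝ} (hf : ConvexOn ℝ univ f)
    {a b : E} (ha : DifferentiableAt ℝ f a) (hb : DifferentiableAt ℝ f b) :
    0 ≤ ⟪∇ f a - ∇ f b, a - b⟫ := by
  have h1 := hf.add_inner_gradient_le ha b
  have h2 := hf.add_inner_gradient_le hb a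
  rw [← neg_sub a b, inner_neg_right] at h1
  rw [inner_sub_left]
  linarith

lemma ConvexOn.inner_fderiv_gradient_self_nonneg {f : E → ℝ} (hf : ConvexOn ℝ univ f)
    (hd : Differentiable ℝ f) {y : E} (hg : DifferentiableAt ℝ (∇ f) y) (v : E) :
    0 ≤ ⟪fderiv ℝ (∇ f) y v, v⟫ := by
  set q : ℝ → ℝ := fun s => ⟪∇ f (y + s • v), v⟫
  have hq : HasDerivAt q ⟪fderiv ℝ (∇ f) y v, v⟫ 0 := by
    have hline : HasDerivAt (fun s : ℝ => y + s • v) v 0 := by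
      simpa using ((hasDerivAt_id (0 : ℝ)).smul_const v).const_add y
    have hg' : HasFDerivAt (∇ f) (fderiv ℝ (∇ f) y) (y + (0 : ℝ) • v) := by
      simpa using hg.hasFDerivAt
    simpa [q] using (hg'.comp_hasDerivAt 0 hline).inner ℝ (hasDerivAt_const (0 : ℝ) v)
  refine hq.nonneg_of_monotone fun s t hst => ?_
  have := hf.inner_gradient_sub_gradient_nonneg (hd (y + t • v)) (hd (y + s • v))
  rw [add_sub_add_left_eq_sub, ← sub_smul, real_inner_smul_right, inner_sub_left] at this
  rcases hst.eq_or_lt with rfl | hlt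
  · rfl
  · simp only [q]; nlinarith

noncomputable def bregmanDiv (f : E → ℝ) (z y : E) : ℝ := f z - f y - ⟪∇ f y, z - y⟫

lemma ConvexOn.bregmanDiv_nonneg {f : E → ℝ} (hf : ConvexOn ℝ univ f) {y : E}
    (hy : DifferentiableAt ℝ f y) (z : E) : 0 ≤ bregmanDiv f z y := by
  unfold bregmanDiv
  linarith [hf.add_inner_gradient_le hy z]

lemma hasDerivAt_bregmanDiv_comp {f : E → ℝ} {x : ℝ → E} {x' : E} {t : ℝ} (z : E)
    (hf : DifferentiableAt ℝ f (x t)) (hg : DifferentiableAt ℝ (∇ f) (x t))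
    (hx : HasDerivAt x x' t) :
    HasDerivAt (fun s => bregmanDiv f z (x s)) ⟪fderiv ℝ (∇ f) (x t) x', x t - z⟫ t := by
  have := ((hasDerivAt_const t (f z)).fun_sub (hf.hasGradientAt.hasDerivAt_comp hx)).fun_sub
    ((hg.hasFDerivAt.comp_hasDerivAt t hx).inner ℝ (hx.const_sub z))
  refine this.congr_deriv ?_
  rw [Function.comp_apply, inner_neg_right, ← neg_sub (x t) z, inner_neg_right]
  ring

end Convex

lemma exists_abs_inner_apply_le {E : Type*} [NormedAddCommGroup E] [InnerProductSpace ℝ E]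
    [ProperSpace E] {x x' : ℝ → E} {L : E → E →L[ℝ] E} (hL : Continuous L)
    {R : ℝ} (hxb : ∀ t, 0 ≤ t → ‖x t‖ ≤ R) (hx'b : ∀ t, 0 ≤ t → ‖x' t‖ ≤ R) (z : E) :
    ∃ M, ∀ t, 0 ≤ t → |⟪L (x t) (x' t), x t - z⟫| ≤ M := by
  obtain ⟨K, hK⟩ :=
    (isCompact_closedBall (0 : E) R).exists_bound_of_continuousOn hL.continuousOn
  refine ⟨K * R * (R + ‖z‖), fun t ht => ?_⟩
  have hxt : x t ∈ Metric.closedBall 0 R := by simpa using hxb t ht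
  have hK0 : 0 ≤ K := (norm_nonneg _).trans (hK _ hxt)
  calc |⟪L (x t) (x' t), x t - z⟫| ≤ ‖L (x t)‖ * ‖x' t‖ * ‖x t - z‖ :=
        (abs_real_inner_le_norm _ _).trans (by gcongr; exact (L (x t)).le_opNorm _)
    _ ≤ K * R * (R + ‖z‖) := by
        have hR : 0 ≤ R := (norm_nonneg _).trans (hx'b t ht)
        gcongr
        · exact hK _ hxt
        · exact hx'b t ht
        · exact (norm_sub_le _ _).trans (add_le_add_left (hxb t ht) _)

namespace DIN

variable {E : Type*} [NormedAddCommGroup E] [InnerProductSpace ℝ E] [CompleteSpace E]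
  {Φ : E → ℝ} {α β : ℝ} {x x' x'' : ℝ → E}

lemma inner_accel_eq {t : ℝ}
    (heq : x'' t + α • x' t + β • fderiv ℝ (∇ Φ) (x t) (x' t) + ∇ Φ (x t) = 0) (w : E) :
    ⟪x'' t, w⟫ =
      -(α * ⟪x' t, w⟫ + β * ⟪fderiv ℝ (∇ Φ) (x t) (x' t), w⟫ + ⟪∇ Φ (x t), w⟫) := by
  have := congrArg (⟪·, w⟫) heq
  simp only [inner_add_left, real_inner_smul_left, inner_zero_left] at this
  linarith

lemma integral_norm_sq_deriv_le (hconv : ConvexOn ℝ univ Φ) (hd : Differentiable ℝ Φ)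
    (hg : Differentiable ℝ (∇ Φ)) (hβ : 0 ≤ β)
    (hx : ∀ t, HasDerivAt x (x' t) t) (hx' : ∀ t, HasDerivAt x' (x'' t) t)
    (heq : ∀ t, 0 ≤ t →
      x'' t + α • x' t + β • fderiv ℝ (∇ Φ) (x t) (x' t) + ∇ Φ (x t) = 0)
    {z : E} (hz : ∀ y, Φ z ≤ Φ y) {t : ℝ} (ht : 0 ≤ t) :
    α * ∫ s in (0 : ℝ)..t, ‖x' s‖ ^ 2 ≤ ‖x' 0‖ ^ 2 / 2 + Φ (x 0) - Φ z := by
  have hx'c : Continuous x' := continuous_iff_continuousAt.2 fun t => (hx' t).continuousAt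
  have hc : Continuous fun s => ‖x' s‖ ^ 2 := by fun_prop
  have hW : ∀ s, HasDerivAt
      (fun s => α * (∫ u in (0 : ℝ)..s, ‖x' u‖ ^ 2) + (‖x' s‖ ^ 2 / 2 + Φ (x s)))
      (α * ‖x' s‖ ^ 2 + (⟪x'' s, x' s⟫ + ⟪∇ Φ (x s), x' s⟫)) s := fun s =>
    ((hc.integral_hasStrictDerivAt 0 s).hasDerivAt.const_mul α).fun_add
      (((hx' s).norm_sq.div_const 2).fun_add ((hd _).hasGradientAt.hasDerivAt_comp (hx s)))
      |>.congr_deriv (by rw [real_inner_comm]; ring)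
  have := antitoneOn_Ici_of_hasDerivAt hW (fun s hs => by
    rw [inner_accel_eq (heq s hs), real_inner_self_eq_norm_sq]
    nlinarith [hconv.inner_fderiv_gradient_self_nonneg hd (hg (x s)) (x' s)])
    self_mem_Ici ht ht
  simp only [intervalIntegral.integral_same, mul_zero, zero_add] at this
  linarith [hz (x t), sq_nonneg ‖x' t‖]

lemma lyapunov_deriv_le {z : E} (hz : ∀ y, Φ z ≤ Φ y) {t : ℝ}
    (heq : x'' t + α • x' t + β • fderiv ℝ (∇ Φ) (x t) (x' t) + ∇ Φ (x t) = 0) :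
    ⟪x' t, x' t⟫ + ⟪x'' t, x t - z⟫ + α * ⟪x' t, x t - z⟫
        + β * ⟪fderiv ℝ (∇ Φ) (x t) (x' t), x t - z⟫
      ≤ ‖x' t‖ ^ 2 - bregmanDiv Φ z (x t) := by
  rw [inner_accel_eq heq, real_inner_self_eq_norm_sq, bregmanDiv, ← neg_sub (x t) z,
    inner_neg_right (∇ Φ (x t))]
  linarith [hz (x t)]

theorem exists_tendsto_norm_sub [ProperSpace E] (hΦ : ContDiff ℝ 2 Φ)
    (hconv : ConvexOn ℝ univ Φ) (hα : 0 < α) (hβ : 0 ≤ β)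
    (hx : ∀ t, HasDerivAt x (x' t) t) (hx' : ∀ t, HasDerivAt x' (x'' t) t)
    (heq : ∀ t, 0 ≤ t →
      x'' t + α • x' t + β • fderiv ℝ (∇ Φ) (x t) (x' t) + ∇ Φ (x t) = 0)
    {R : ℝ} (hxb : ∀ t, 0 ≤ t → ‖x t‖ ≤ R) (hx'b : ∀ t, 0 ≤ t → ‖x' t‖ ≤ R)
    {z : E} (hz : ∀ y, Φ z ≤ Φ y) :
    ∃ l, Tendsto (fun t => ‖x t - z‖) atTop (𝓝 l) := by
  have hd : Differentiable ℝ Φ := hΦ.differentiable (by norm_num)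
  have hg1 : ContDiff ℝ 1 (∇ Φ) := hΦ.contDiff_gradient
  have hg : Differentiable ℝ (∇ Φ) := hg1.differentiable one_ne_zero
  have hx'c : Continuous x' := continuous_iff_continuousAt.2 fun t => (hx' t).continuousAt
  obtain ⟨M, hM⟩ := exists_abs_inner_apply_le (hg1.continuous_fderiv one_ne_zero) hxb hx'b z
  have hh : ∀ t, HasDerivAt (fun t => ‖x t - z‖ ^ 2 / 2) ⟪x' t, x t - z⟫ t := fun t =>
    ((hx t).sub_const z).norm_sq.div_const 2 |>.congr_deriv (by rw [real_inner_comm]; ring)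
  have hF : ∀ t, HasDerivAt
      (fun t => ⟪x' t, x t - z⟫ + α * (‖x t - z‖ ^ 2 / 2) + β * bregmanDiv Φ z (x t))
      (⟪x' t, x' t⟫ + ⟪x'' t, x t - z⟫ + α * ⟪x' t, x t - z⟫
        + β * ⟪fderiv ℝ (∇ Φ) (x t) (x' t), x t - z⟫) t := fun t =>
    (((hx' t).inner ℝ ((hx t).sub_const z)).fun_add ((hh t).const_mul α)).fun_add
      ((hasDerivAt_bregmanDiv_comp z (hd _) (hg _) (hx t)).const_mul β)
  have hA : ∀ t, 0 ≤ t →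
      ∫ s in (0 : ℝ)..t, ‖x' s‖ ^ 2 ≤ (‖x' 0‖ ^ 2 / 2 + Φ (x 0) - Φ z) / α := fun t ht =>
    (le_div_iff₀' hα).2 (integral_norm_sq_deriv_le hconv hd hg hβ hx hx' heq hz ht)
  have hh₁ : ∀ t, 0 ≤ t → -(R * (R + ‖z‖)) ≤ ⟪x' t, x t - z⟫ := fun t ht =>
    neg_le_of_abs_le ((abs_real_inner_le_norm _ _).trans
      (mul_le_mul (hx'b t ht) ((norm_sub_le _ _).trans (add_le_add_left (hxb t ht) _))
        (norm_nonneg _) ((norm_nonneg _).trans (hxb t ht))))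
  obtain ⟨l, hl⟩ := exists_tendsto_of_lyapunov hα hβ hh
    (fun t => hasDerivAt_bregmanDiv_comp z (hd _) (hg _) (hx t)) hF
    (fun t => ((hx'c.norm.pow 2).integral_hasStrictDerivAt 0 t).hasDerivAt)
    (fun t ht => lyapunov_deriv_le hz (heq t ht)) (fun t _ => sq_nonneg _) hA
    (fun t _ => hconv.bregmanDiv_nonneg (hd _) z) hM (fun t _ => by positivity) hh₁
  refine ⟨√(2 * l), ?_⟩
  convert ((hl.const_mul 2).sqrt) using 2 with t
  rw [mul_div_cancel₀ _ two_ne_zero, Real.sqrt_sq (norm_nonneg _)]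

end DIN

theorem stmt_17_general {n : ℕ} (Φ : EuclideanSpace ℝ (Fin n) → ℝ) (hΦ : ContDiff ℝ 2 Φ)
    (hconv : ConvexOn ℝ Set.univ Φ)
    (α β : ℝ) (hα : 0 < α) (hβ : 0 < β)
    (x x' x'' : ℝ → EuclideanSpace ℝ (Fin n))
    (hx : ∀ t : ℝ, HasDerivAt x (x' t) t)
    (hx' : ∀ t : ℝ, HasDerivAt x' (x'' t) t)
    (heq : ∀ t : ℝ, 0 ≤ t →
      x'' t + α • x' t + β • (fderiv ℝ (gradient Φ) (x t)) (x' t) + gradient Φ (x t) = 0)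
    (R : ℝ)
    (hxb : ∀ t : ℝ, 0 ≤ t → ‖x t‖ ≤ R)
    (hx'b : ∀ t : ℝ, 0 ≤ t → ‖x' t‖ ≤ R) :
    ∀ z : EuclideanSpace ℝ (Fin n), (∀ y, Φ z ≤ Φ y) →
      ∃ l : ℝ, Tendsto (fun t => ‖x t - z‖) atTop (nhds l) :=
  fun _ hz => DIN.exists_tendsto_norm_sub hΦ hconv hα hβ.le hx hx' heq hxb hx'b hz

theorem stmt_17 {n : ℕ} (Φ : EuclideanSpace ℝ (Fin n) → ℝ) (hΦ : ContDiff ℝ 2 Φ)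
    (hconv : ConvexOn ℝ Set.univ Φ)
    (hmin : ∃ z, ∀ y, Φ z ≤ Φ y)
    (α β : ℝ) (hα : 0 < α) (hβ : 0 < β)
    (x x' x'' : ℝ → EuclideanSpace ℝ (Fin n))
    (hx : ∀ t : ℝ, HasDerivAt x (x' t) t)
    (hx' : ∀ t : ℝ, HasDerivAt x' (x'' t) t)
    (heq : ∀ t : ℝ, 0 ≤ t →
      x'' t + α • x' t + β • (fderiv ℝ (gradient Φ) (x t)) (x' t) + gradient Φ (x t) = 0)
    (R : ℝ) (hR : 0 < R)
    (hxb : ∀ t : ℝ, 0 ≤ t → ‖x t‖ ≤ R)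
    (hx'b : ∀ t : ℝ, 0 ≤ t → ‖x' t‖ ≤ R) :
    ∀ z : EuclideanSpace ℝ (Fin n), (∀ y, Φ z ≤ Φ y) →
      ∃ l : ℝ, Tendsto (fun t => ‖x t - z‖) atTop (nhds l) :=
  stmt_17_general Φ hΦ hconv α β hα hβ x x' x'' hx hx' heq R hxb hx'b
end

section
/- Let n ∈ ℕ, let x : ℝ → ℝ^n be continuous with bounded image on [0,∞), and let S ⊆ ℝ^n be nonempty. Assume: (i) for every z ∈ S, the limit lim_{t→∞} ‖x(t) - z‖ exists; and (ii) every cluster point of x at infinity lies in S, i.e., whenever t_k → ∞ and x(t_k) → y for some sequence (t_k) and point y, then y ∈ S. Then there exists x* ∈ S such that x(t) → x* as t → ∞. -/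
/-! A bounded trajectory has a cluster point `y` at infinity, reached along times `t_k → ∞`;
by hypothesis `y ∈ S`, so `‖x t - y‖` converges, and its limit must be `0` because it vanishes
along `t_k`. -/

open Filter Topology

theorem exists_tendsto_atTop_and_tendsto_comp_of_norm_le {E : Type*} [NormedAddCommGroup E]
    [ProperSpace E] {f : ℝ → E} {R : ℝ} (hf : ∀ t : ℝ, 0 ≤ t → ‖f t‖ ≤ R) :
    ∃ (tk : ℕ → ℝ) (y : E), Tendsto tk atTop atTop ∧ Tendsto (f ∘ tk) atTop (𝓝 y) := by
  have hmem : ∀ k : ℕ, f k ∈ Metric.closedBall (0 : E) R := fun k =>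
    mem_closedBall_zero_iff.2 (hf k k.cast_nonneg)
  obtain ⟨y, -, φ, hφ, hconv⟩ := (isCompact_closedBall (0 : E) R).tendsto_subseq hmem
  exact ⟨fun k => (φ k : ℝ), y, tendsto_natCast_atTop_atTop.comp hφ.tendsto_atTop, hconv⟩

theorem tendsto_of_tendsto_dist_of_tendsto_comp {α β : Type*} [PseudoMetricSpace β]
    {F : Filter α} {f : α → β} {y : β} {l : ℝ} {u : ℕ → α}
    (hdist : Tendsto (fun t => dist (f t) y) F (𝓝 l)) (hu : Tendsto u atTop F)
    (hfu : Tendsto (f ∘ u) atTop (𝓝 y)) : Tendsto f F (𝓝 y) := by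
  have hl : l = 0 := tendsto_nhds_unique (hdist.comp hu) (tendsto_iff_dist_tendsto_zero.1 hfu)
  exact tendsto_iff_dist_tendsto_zero.2 (hl ▸ hdist)

theorem stmt_18_general {n : ℕ} (x : ℝ → EuclideanSpace ℝ (Fin n))
    (R : ℝ) (hxb : ∀ t : ℝ, 0 ≤ t → ‖x t‖ ≤ R)
    (S : Set (EuclideanSpace ℝ (Fin n)))
    (hlim : ∀ z ∈ S, ∃ l : ℝ, Tendsto (fun t => ‖x t - z‖) atTop (nhds l))
    (hclus : ∀ (tk : ℕ → ℝ) (y : EuclideanSpace ℝ (Fin n)),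
      Tendsto tk atTop atTop → Tendsto (fun k => x (tk k)) atTop (nhds y) → y ∈ S) :
    ∃ xstar ∈ S, Tendsto x atTop (nhds xstar) := by
  obtain ⟨tk, y, htk, hconv⟩ := exists_tendsto_atTop_and_tendsto_comp_of_norm_le hxb
  have hyS : y ∈ S := hclus tk y htk hconv
  obtain ⟨l, hl⟩ := hlim y hyS
  have hdist : Tendsto (fun t => dist (x t) y) atTop (𝓝 l) := by
    simpa only [dist_eq_norm] using hl
  exact ⟨y, hyS, tendsto_of_tendsto_dist_of_tendsto_comp hdist htk hconv⟩

theorem stmt_18 {n : ℕ} (x : ℝ → EuclideanSpace ℝ (Fin n)) (hx : Continuous x)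
    (R : ℝ) (hxb : ∀ t : ℝ, 0 ≤ t → ‖x t‖ ≤ R)
    (S : Set (EuclideanSpace ℝ (Fin n))) (hS : S.Nonempty)
    (hlim : ∀ z ∈ S, ∃ l : ℝ, Tendsto (fun t => ‖x t - z‖) atTop (nhds l))
    (hclus : ∀ (tk : ℕ → ℝ) (y : EuclideanSpace ℝ (Fin n)),
      Tendsto tk atTop atTop → Tendsto (fun k => x (tk k)) atTop (nhds y) → y ∈ S) :
    ∃ xstar ∈ S, Tendsto x atTop (nhds xstar) :=
  stmt_18_general x R hxb S hlim hclus
end
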